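/- arXiv:2306.11828 — 7 statements merged into one kernel-verified Lean document; each statement's English description precedes it below -/
import Mathlib

section
/- Let G be a graph on n vertices, let x be a fractional matching in G with ‖x‖ ≥ 1 whose entries are dyadic rationals x_e = Σ_{i≥0} (x_e)_i·2^{−i}, let ε' ∈ (0, 1/3], and let L be a positive integer with 2^{−L} ≤ ε'·min{x_e : x_e > 0}. Define x' ∈ ℝ_{≥0}^E by x'_e := 0 if x_e < ε'/n², and x'_e := Σ_{i=0}^{L} (x_e)_i·2^{−i} otherwise. Then x' ≤ x entrywise (so x' is a fractional matching with supp(x') ⊆ supp(x)), ‖x'‖ ≥ (1 − 2ε')·‖x‖, and every matching M ⊆ supp(x') with |M| ≥ (1 − ε')·‖x'‖ satisfies |M| ≥ (1 − 3ε')·‖x‖. -/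
open Finset

set_option maxHeartbeats 1000000

variable {V : Type*} [Fintype V] [DecidableEq V]

/-- The fractional degree `x(v) := Σ_{e ∋ v} x_e` of a vertex `v` under `x`. -/
noncomputable def fracDeg (x : Sym2 V → ℝ) (v : V) : ℝ :=
  ∑ e : Sym2 V, if v ∈ e then x e else 0

/-- `‖x‖ := Σ_e x_e`. -/
noncomputable def vnorm (x : Sym2 V → ℝ) : ℝ :=
  ∑ e : Sym2 V, x e

/-- A matching: a set of pairwise vertex-disjoint (non-loop) edges. -/
def IsMatchingSet {V : Type*} (M : Finset (Sym2 V)) : Prop :=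
  (∀ e ∈ M, ¬ e.IsDiag) ∧ ∀ e ∈ M, ∀ f ∈ M, e ≠ f → ∀ v : V, v ∈ e → v ∉ f

/-- Let `G` be a graph on `n` vertices, let `x` be a fractional matching in `G` with `‖x‖ ≥ 1`
whose entries are dyadic rationals `x_e = Σ_{i≥0} (x_e)_i·2^{−i}` (with binary digits `b e i`),
let `ε' ∈ (0, 1/3]`, and let `L ≥ 1` with `2^{−L} ≤ ε'·min{x_e : x_e > 0}`.
Define `x'_e := 0` if `x_e < ε'/n²`, and `x'_e := Σ_{i=0}^{L} (x_e)_i·2^{−i}` otherwise.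
Then `x' ≤ x` entrywise (so `x'` is a fractional matching with `supp(x') ⊆ supp(x)`),
`‖x'‖ ≥ (1 − 2ε')·‖x‖`, and every matching `M ⊆ supp(x')` with `|M| ≥ (1 − ε')·‖x'‖`
satisfies `|M| ≥ (1 − 3ε')·‖x‖`. -/
theorem stmt_2 (G : SimpleGraph V) (x : Sym2 V → ℝ) (b : Sym2 V → ℕ → ℕ)
    (hb : ∀ e i, b e i ≤ 1)
    (hxb : ∀ e, x e = ∑' i : ℕ, (b e i : ℝ) / 2 ^ i)
    (hsupp : ∀ e, x e ≠ 0 → e ∈ G.edgeSet)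
    (hfm : ∀ v, fracDeg x v ≤ 1)
    (hnorm : 1 ≤ vnorm x)
    (ε' : ℝ) (hε'0 : 0 < ε') (hε'1 : ε' ≤ 1 / 3)
    (L : ℕ) (hL : 1 ≤ L)
    (hLmin : ∀ e, 0 < x e → ((2 : ℝ) ^ L)⁻¹ ≤ ε' * x e)
    (x' : Sym2 V → ℝ)
    (hx' : ∀ e, x' e = if x e < ε' / (Fintype.card V : ℝ) ^ 2 then 0
        else ∑ i ∈ Finset.range (L + 1), (b e i : ℝ) / 2 ^ i) :
    (∀ e, x' e ≤ x e) ∧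
    (∀ e, x' e ≠ 0 → x e ≠ 0) ∧
    (∀ v, fracDeg x' v ≤ 1) ∧
    (1 - 2 * ε') * vnorm x ≤ vnorm x' ∧
    ∀ M : Finset (Sym2 V), IsMatchingSet M → (∀ e ∈ M, x' e ≠ 0) →
      (1 - ε') * vnorm x' ≤ (M.card : ℝ) →
      (1 - 3 * ε') * vnorm x ≤ (M.card : ℝ) := by
  classical
  -- basic facts about the digit series
  have hf : ∀ e i, (0:ℝ) ≤ (b e i : ℝ) / 2 ^ i := fun e i => by positivity
  have hle : ∀ e i, (b e i : ℝ) / 2 ^ i ≤ (1/2:ℝ) ^ i := by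
    intro e i
    rw [div_pow, one_pow]
    apply div_le_div_of_nonneg_right _ (by positivity)
    · exact_mod_cast hb e i
  have hsum : ∀ e, Summable (fun i => (b e i : ℝ) / 2 ^ i) := fun e =>
    Summable.of_nonneg_of_le (hf e) (hle e) summable_geometric_two
  have hxnn : ∀ e, 0 ≤ x e := fun e => by
    rw [hxb e]; exact tsum_nonneg (hf e)
  have hx'le : ∀ e, x' e ≤ x e := by
    intro e
    rw [hx' e]
    split_ifs with h
    · exact hxnn e
    · rw [hxb e]
      exact Summable.sum_le_tsum _ (fun i _ => hf e i) (hsum e)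
  have hx'nn : ∀ e, 0 ≤ x' e := by
    intro e
    rw [hx' e]
    split_ifs with h
    · exact le_rfl
    · exact Finset.sum_nonneg fun i _ => hf e i
  have hsupp' : ∀ e, x' e ≠ 0 → x e ≠ 0 := by
    intro e he
    have h1 := hx'le e
    have h2 := hx'nn e
    intro hx0
    exact he (le_antisymm (hx0 ▸ h1) h2)
  -- the graph is nonempty
  have hn : 1 ≤ Fintype.card V := by
    by_contra h
    push_neg at h
    interval_cases h' : Fintype.card V
    · have : IsEmpty V := Fintype.card_eq_zero_iff.mp h'
      have : vnorm x = 0 := by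
        unfold vnorm
        have : IsEmpty (Sym2 V) := by infer_instance
        simp
      linarith
  have hnpos : (0:ℝ) < (Fintype.card V : ℝ) ^ 2 := by positivity
  -- per-edge loss bound
  have hloss : ∀ e, x e - x' e ≤ ε' / (Fintype.card V : ℝ) ^ 2 + ε' * x e := by
    intro e
    rw [hx' e]
    split_ifs with h
    · have : 0 ≤ ε' * x e := mul_nonneg hε'0.le (hxnn e)
      linarith
    · push_neg at h
      have hxe : 0 < x e := lt_of_lt_of_le (by positivity) h
      have htail : x e - ∑ i ∈ Finset.range (L + 1), (b e i : ℝ) / 2 ^ i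
          = ∑' i : ℕ, (b e (i + (L+1)) : ℝ) / 2 ^ (i + (L+1)) := by
        rw [hxb e, ← Summable.sum_add_tsum_nat_add (L+1) (hsum e)]
        ring
      have hgeo : ∑' i : ℕ, (b e (i + (L+1)) : ℝ) / 2 ^ (i + (L+1))
          ≤ ((2:ℝ) ^ L)⁻¹ := by
        have h1 : ∑' i : ℕ, (b e (i + (L+1)) : ℝ) / 2 ^ (i + (L+1))
            ≤ ∑' i : ℕ, (1/2:ℝ) ^ (i + (L+1)) := by
          apply Summable.tsum_le_tsum
          · intro i; exact hle e _
          · exact (summable_nat_add_iff (L+1)).2 (hsum e)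
          · exact (summable_nat_add_iff (L+1)).2 summable_geometric_two
        have h2 : ∑' i : ℕ, (1/2:ℝ) ^ (i + (L+1)) = ((2:ℝ) ^ L)⁻¹ := by
          have := tsum_geometric_two
          calc ∑' i : ℕ, (1/2:ℝ) ^ (i + (L+1))
              = ∑' i : ℕ, (1/2:ℝ) ^ i * (1/2:ℝ) ^ (L+1) := by
                congr 1; funext i; rw [pow_add]
            _ = (∑' i : ℕ, (1/2:ℝ) ^ i) * (1/2:ℝ) ^ (L+1) := tsum_mul_right
            _ = 2 * (1/2:ℝ) ^ (L+1) := by rw [tsum_geometric_two]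
            _ = ((2:ℝ) ^ L)⁻¹ := by
                rw [pow_succ, one_div, inv_pow]
                ring
        linarith
      have hmin := hLmin e hxe
      have hεn : (0:ℝ) ≤ ε' / (Fintype.card V : ℝ) ^ 2 := by positivity
      linarith [htail ▸ hgeo]
  -- norm bound
  have hcard : (Fintype.card (Sym2 V) : ℝ) ≤ (Fintype.card V : ℝ) ^ 2 := by
    have h1 : Fintype.card (Sym2 V) ≤ Fintype.card V ^ 2 := by
      rw [Sym2.card, Nat.choose_two_right]
      simp only [Nat.add_sub_cancel]
      have : (Fintype.card V + 1) * Fintype.card V ≤ 2 * Fintype.card V ^ 2 := by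
        nlinarith [hn]
      exact Nat.div_le_of_le_mul this
    exact_mod_cast h1
  have hnormbd : (1 - 2 * ε') * vnorm x ≤ vnorm x' := by
    have hsumloss : vnorm x - vnorm x'
        ≤ (Fintype.card (Sym2 V) : ℝ) * (ε' / (Fintype.card V : ℝ) ^ 2) + ε' * vnorm x := by
      unfold vnorm
      rw [← Finset.sum_sub_distrib]
      calc ∑ e : Sym2 V, (x e - x' e)
          ≤ ∑ _e : Sym2 V, (ε' / (Fintype.card V : ℝ) ^ 2 + ε' * x _e) :=
            Finset.sum_le_sum fun e _ => hloss e
        _ = (Fintype.card (Sym2 V) : ℝ) * (ε' / (Fintype.card V : ℝ) ^ 2)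
            + ε' * ∑ e : Sym2 V, x e := by
            rw [Finset.sum_add_distrib, Finset.sum_const, Finset.mul_sum, nsmul_eq_mul]
            rfl
    have h1 : (Fintype.card (Sym2 V) : ℝ) * (ε' / (Fintype.card V : ℝ) ^ 2) ≤ ε' := by
      have h2 : (Fintype.card (Sym2 V) : ℝ) * (ε' / (Fintype.card V : ℝ) ^ 2)
          ≤ (Fintype.card V : ℝ) ^ 2 * (ε' / (Fintype.card V : ℝ) ^ 2) :=
        mul_le_mul_of_nonneg_right hcard (by positivity)
      have h3 : (Fintype.card V : ℝ) ^ 2 * (ε' / (Fintype.card V : ℝ) ^ 2) = ε' := by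
        field_simp
      linarith
    have h4 : ε' ≤ ε' * vnorm x := le_mul_of_one_le_right hε'0.le hnorm
    linarith
  refine ⟨hx'le, hsupp', ?_, hnormbd, ?_⟩
  · intro v
    refine le_trans ?_ (hfm v)
    unfold fracDeg
    apply Finset.sum_le_sum
    intro e _
    split_ifs with h
    · exact hx'le e
    · exact le_rfl
  · intro M _ _ hM
    have hX0 : (0:ℝ) ≤ vnorm x := by linarith
    nlinarith [hnormbd, hM, hε'0, hε'1, hX0, mul_nonneg hε'0.le hε'0.le]
end

section
/- Let G=(V,E) be a finite multigraph in which every edge has multiplicity at most two. Then the edge multiset E can be partitioned into two simple (multiplicity-free) edge sets E₁ and E₂ such that: (P1) |E₁| = ⌈|E|/2⌉ and |E₂| = ⌊|E|/2⌋; (P2) for each i ∈ {1,2} and every vertex v, the degree d_i(v) of v in E_i satisfies d_G(v)/2 − 1 ≤ d_i(v) ≤ d_G(v)/2 + 1, where d_G(v) counts edges of v in E with multiplicity; and (P3) if G is bipartite, then moreover ⌊d_G(v)/2⌋ ≤ d_i(v) ≤ ⌈d_G(v)/2⌉ for each i ∈ {1,2} and every vertex v. -/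
open Finset

variable {V : Type*} [DecidableEq V]

/-- Degree of `v` in a multiset of edges, counted with multiplicity. -/
def mdeg (E : Multiset (Sym2 V)) (v : V) : ℕ :=
  Multiset.card (E.filter (fun e => v ∈ e))

/-- Degree of `v` in a (simple) finite set of edges. -/
def fdeg (F : Finset (Sym2 V)) (v : V) : ℕ :=
  (F.filter (fun e => v ∈ e)).card

/-- The multigraph with edge multiset `E` is bipartite (its underlying simple graph is
two-colorable). -/
def MultigraphBipartite (E : Multiset (Sym2 V)) : Prop :=
  ∃ c : V → Bool, ∀ e ∈ E, ∀ a b : V, e = s(a, b) → c a ≠ c b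

/-!
Edges of multiplicity two go once into each half, so it suffices to split a loopless multigraph
`S` into halves `A`, `B` with `⌈|S|/2⌉` and `⌊|S|/2⌋` edges and `|d_A(v) - d_B(v)| ≤ 2` at every
vertex, `≤ 1` when `S` is bipartite; applied to the simple edges, the halves are simple.

Colour the edges of a longest trail alternately. This leaves `d_A - d_B` unchanged except at the
two ends, where it moves by `±1`, or by `0` or `2` at the start of a closed trail; a closed trail in
a bipartite graph has even length, so then it is `0`. No other edge meets an end of a longest trail
(it would extend the trail), so this colouring and a split of the remaining edges, found by
induction, never both change the imbalance at one vertex. If both have an odd number of edges, the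
colours on the trail are exchanged to keep the sizes balanced.
-/

namespace Multiset

theorem cons_le_of_mem_sub {α : Type*} [DecidableEq α] {a : α} {s t : Multiset α}
    (h : s ≤ t) (ha : a ∈ t - s) : a ::ₘ s ≤ t :=
  calc a ::ₘ s = {a} + s := (singleton_add a s).symm
    _ ≤ t - s + s := add_le_add (singleton_le.2 ha) le_rfl
    _ = t := tsub_add_cancel_of_le h

theorem exists_add_add_eq_of_count_le_two {α : Type*} [DecidableEq α] {E : Multiset α}
    (h : ∀ a, E.count a ≤ 2) : ∃ D S : Multiset α, (D + S).Nodup ∧ D + D + S = E := by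
  refine ⟨E - E.dedup, E.dedup - (E - E.dedup), nodup_iff_count_le_one.2 fun a => ?_,
    ext.2 fun a => ?_⟩ <;>
  · have := h a
    simp only [count_add, count_sub, count_dedup]
    split_ifs with ha
    · have := count_pos.2 ha
      omega
    · simp [count_eq_zero.2 ha]

end Multiset

namespace List

def alternating {α : Type*} : Bool → List α → List α
  | _, [] => []
  | true, a :: l => a :: alternating false l
  | false, _ :: l => alternating true l

theorem coe_alternating_add_alternating {α : Type*} (l : List α) :
    (alternating true l : Multiset α) + alternating false l = l := by
  induction l with
  | nil => rfl
  | cons a l ih =>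
    calc (alternating true (a :: l) : Multiset α) + alternating false (a :: l)
        = a ::ₘ (alternating true l + alternating false l) := by
          simp only [alternating, ← Multiset.cons_coe, Multiset.cons_add]
          rw [add_comm]
      _ = a :: l := by rw [ih]; rfl

theorem length_alternating {α : Type*} (l : List α) :
    (alternating true l).length = (l.length + 1) / 2 ∧
      (alternating false l).length = l.length / 2 := by
  induction l with
  | nil => simp [alternating]
  | cons a l ih =>
    obtain ⟨h₁, h₂⟩ := ih
    simp only [alternating, length_cons, h₁, h₂, and_true]
    omega

end List

open List

theorem mdeg_add (A B : Multiset (Sym2 V)) (v : V) : mdeg (A + B) v = mdeg A v + mdeg B v := by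
  simp [mdeg, Multiset.filter_add]

theorem mdeg_cons (e : Sym2 V) (A : Multiset (Sym2 V)) (v : V) :
    mdeg (e ::ₘ A) v = (if v ∈ e then 1 else 0) + mdeg A v := by
  unfold mdeg
  rw [Multiset.filter_cons]
  split_ifs <;> simp [add_comm]

theorem mdeg_eq_zero {A : Multiset (Sym2 V)} {v : V} (h : ∀ e ∈ A, v ∉ e) : mdeg A v = 0 := by
  simpa [mdeg, Multiset.filter_eq_nil] using h

section Walks

variable {α : Type*}

def walkEdges (x : α) : List α → List (Sym2 α)
  | [] => []
  | y :: p => s(x, y) :: walkEdges y p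

def walkEnd (x : α) : List α → α
  | [] => x
  | y :: p => walkEnd y p

theorem length_walkEdges (x : α) (p : List α) : (walkEdges x p).length = p.length := by
  induction p generalizing x with
  | nil => rfl
  | cons y p ih => simp [walkEdges, ih]

theorem walkEdges_concat (x w : α) (p : List α) :
    walkEdges x (p ++ [w]) = walkEdges x p ++ [s(walkEnd x p, w)] := by
  induction p generalizing x with
  | nil => rfl
  | cons y p ih => simp [walkEdges, walkEnd, ih]

theorem walkEnd_color_eq_iff {c : α → Bool} {x : α} {p : List α}
    (hc : ∀ e ∈ walkEdges x p, ∀ a b, e = s(a, b) → c a ≠ c b) :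
    c (walkEnd x p) = c x ↔ Even p.length := by
  induction p generalizing x with
  | nil => simp [walkEnd]
  | cons y p ih =>
    have hxy : c x ≠ c y := hc _ (by simp [walkEdges]) x y rfl
    have ih := @ih y fun e he => hc e (by simp [walkEdges, he])
    rw [walkEnd, length_cons, Nat.even_add_one, ← ih]
    cases _ : c x <;> cases _ : c y <;> cases _ : c (walkEnd y p) <;> simp_all

theorem length_le_card_of_walkEdges_le {S : Multiset (Sym2 α)} {x : α} {p : List α}
    (h : (walkEdges x p : Multiset (Sym2 α)) ≤ S) : p.length ≤ Multiset.card S := by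
  simpa [length_walkEdges] using Multiset.card_le_card h

theorem exists_longest_trail {S : Multiset (Sym2 α)} (hS : S ≠ 0) :
    ∃ (x : α) (p : List α), p ≠ [] ∧ (walkEdges x p : Multiset (Sym2 α)) ≤ S ∧
      ∀ (y : α) (q : List α), (walkEdges y q : Multiset (Sym2 α)) ≤ S → q.length ≤ p.length := by
  classical
  let IsTrailLength (n : ℕ) :=
    ∃ (x : α) (p : List α), (walkEdges x p : Multiset (Sym2 α)) ≤ S ∧ p.length = n
  obtain ⟨e, he⟩ := Multiset.exists_mem_of_ne_zero hS
  induction e using Sym2.ind with | h a b =>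
  have h₁ : IsTrailLength 1 := ⟨a, [b], by simpa [walkEdges] using he, rfl⟩
  have hcard : 1 ≤ Multiset.card S := Multiset.card_pos.2 hS
  obtain ⟨x, p, hp, hlen⟩ := Nat.findGreatest_spec hcard h₁
  refine ⟨x, p, ?_, hp, fun y q hq => hlen ▸ Nat.le_findGreatest
    (length_le_card_of_walkEdges_le hq) ⟨y, q, hq, rfl⟩⟩
  rw [← List.length_pos_iff, hlen]
  exact Nat.le_findGreatest hcard h₁

theorem MultigraphBipartite.mono {E F : Multiset (Sym2 α)} (hF : MultigraphBipartite F)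
    (h : E ≤ F) : MultigraphBipartite E :=
  let ⟨c, hc⟩ := hF
  ⟨c, fun e he => hc e (Multiset.mem_of_le h he)⟩

theorem MultigraphBipartite.even_length_of_walkEnd_eq {x : α} {p : List α}
    (hbip : MultigraphBipartite (↑(walkEdges x p) : Multiset (Sym2 α))) (h : walkEnd x p = x) :
    Even p.length :=
  let ⟨_, hc⟩ := hbip
  (walkEnd_color_eq_iff hc).1 (congrArg _ h)

end Walks

theorem notMem_of_mem_sub_walkEdges {S : Multiset (Sym2 V)} {x : V} {p : List V}
    (hp : (walkEdges x p : Multiset (Sym2 V)) ≤ S)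
    (hmax : ∀ (y : V) (q : List V), (walkEdges y q : Multiset (Sym2 V)) ≤ S → q.length ≤ p.length)
    {e : Sym2 V} (he : e ∈ S - walkEdges x p) : x ∉ e ∧ walkEnd x p ∉ e := by
  constructor
  · intro hx
    obtain ⟨w, rfl⟩ := Sym2.mem_iff_exists.1 hx
    have := hmax w (x :: p) (by
      simpa [walkEdges, Sym2.eq_swap] using Multiset.cons_le_of_mem_sub hp he)
    simp at this
  · intro hz
    obtain ⟨w, rfl⟩ := Sym2.mem_iff_exists.1 hz
    have := hmax x (p ++ [w]) (by
      rw [walkEdges_concat, ← Multiset.coe_add, Multiset.coe_singleton, add_comm,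
        Multiset.singleton_add]
      exact Multiset.cons_le_of_mem_sub hp he)
    simp at this

theorem mdeg_alternating_sub_mdeg_alternating (x : V) (p : List V)
    (hloop : ∀ e ∈ walkEdges x p, ¬ e.IsDiag) (v : V) :
    (mdeg (alternating true (walkEdges x p)) v : ℤ) - mdeg (alternating false (walkEdges x p)) v =
      (if v = x then 1 else 0) - (-1) ^ p.length * (if v = walkEnd x p then 1 else 0) := by
  induction p generalizing x with
  | nil =>
    rw [walkEnd]
    simp [walkEdges, alternating, mdeg]
  | cons y p ih =>
    have hxy : x ≠ y := by simpa using hloop s(x, y) (by simp [walkEdges])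
    have ih := ih y fun e he => hloop e (by simp [walkEdges, he])
    have hmem : (if v ∈ s(x, y) then 1 else 0 : ℕ) =
        (if v = x then 1 else 0) + (if v = y then 1 else 0) := by
      by_cases hx : v = x <;> by_cases hy : v = y <;> simp_all
    rw [walkEnd]
    simp only [walkEdges, alternating, ← Multiset.cons_coe, mdeg_cons, hmem, length_cons]
    split_ifs at ih ⊢ <;> push_cast at ih ⊢ <;> linear_combination (-1 : ℤ) * ih

def IsBalancedSplit (k : ℤ) (S A B : Multiset (Sym2 V)) : Prop :=
  A + B = S ∧ Multiset.card B ≤ Multiset.card A ∧ Multiset.card A ≤ Multiset.card B + 1 ∧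
    ∀ v, |(mdeg A v : ℤ) - mdeg B v| ≤ k

theorem isBalancedSplit_alternating_walkEdges {k : ℤ} {x : V} {p : List V}
    (hloop : ∀ e ∈ walkEdges x p, ¬ e.IsDiag) (hk : 1 ≤ k)
    (hbip : MultigraphBipartite (↑(walkEdges x p) : Multiset (Sym2 V)) ∨ 2 ≤ k) :
    IsBalancedSplit k (↑(walkEdges x p) : Multiset (Sym2 V)) ↑(alternating true (walkEdges x p))
      ↑(alternating false (walkEdges x p)) := by
  obtain ⟨hA, hB⟩ := length_alternating (walkEdges x p)
  refine ⟨coe_alternating_add_alternating _, ?_, ?_, fun v => ?_⟩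
  · simp only [Multiset.coe_card, hA, hB]; omega
  · simp only [Multiset.coe_card, hA, hB]; omega
  have hclosed : walkEnd x p = x → (-1 : ℤ) ^ p.length = 1 ∨ 2 ≤ k := fun h =>
    hbip.imp (fun hbip => (hbip.even_length_of_walkEnd_eq h).neg_one_pow) id
  rw [mdeg_alternating_sub_mdeg_alternating x p hloop v, abs_le]
  rcases neg_one_pow_eq_or ℤ p.length with h | h <;> rw [h] at hclosed ⊢ <;>
    split_ifs with hx hz <;> first | omega | (subst hx; have := hclosed hz.symm; omega)

theorem IsBalancedSplit.mdeg_add_mdeg {k : ℤ} {S A B : Multiset (Sym2 V)}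
    (h : IsBalancedSplit k S A B) (v : V) : mdeg A v + mdeg B v = mdeg S v := by
  rw [← mdeg_add, h.1]

theorem IsBalancedSplit.exists_add {k : ℤ} {S T A₁ B₁ A₂ B₂ : Multiset (Sym2 V)}
    (h₁ : IsBalancedSplit k S A₁ B₁) (h₂ : IsBalancedSplit k T A₂ B₂)
    (hdeg : ∀ v, mdeg A₁ v = mdeg B₁ v ∨ mdeg A₂ v = mdeg B₂ v) :
    ∃ A B, IsBalancedSplit k (S + T) A B := by
  obtain ⟨rfl, hB₁, hA₁, hk₁⟩ := h₁
  obtain ⟨rfl, hB₂, hA₂, hk₂⟩ := h₂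
  by_cases hodd : Multiset.card A₁ = Multiset.card B₁ + 1 ∧
    Multiset.card A₂ = Multiset.card B₂ + 1
  · -- both splits have a surplus edge in their first half: exchange the halves of the second
    refine ⟨A₁ + B₂, B₁ + A₂, by abel, ?_, ?_, fun v => ?_⟩
    · simp only [Multiset.card_add]; omega
    · simp only [Multiset.card_add]; omega
    have h₁ := abs_le.1 (hk₁ v)
    have h₂ := abs_le.1 (hk₂ v)
    rw [abs_le, mdeg_add, mdeg_add]
    have := hdeg v
    omega
  · refine ⟨A₁ + A₂, B₁ + B₂, by abel, ?_, ?_, fun v => ?_⟩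
    · simp only [Multiset.card_add]; omega
    · simp only [Multiset.card_add]; omega
    have h₁ := abs_le.1 (hk₁ v)
    have h₂ := abs_le.1 (hk₂ v)
    rw [abs_le, mdeg_add, mdeg_add]
    have := hdeg v
    omega

theorem exists_isBalancedSplit {k : ℤ} (hk : 1 ≤ k) (S : Multiset (Sym2 V))
    (hloop : ∀ e ∈ S, ¬ e.IsDiag) (hbip : MultigraphBipartite S ∨ 2 ≤ k) :
    ∃ A B, IsBalancedSplit k S A B := by
  induction hn : Multiset.card S using Nat.strong_induction_on generalizing S with
  | _ n ih =>
  rcases eq_or_ne S 0 with rfl | hS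
  · exact ⟨0, 0, by simp [IsBalancedSplit, mdeg]; omega⟩
  obtain ⟨x, p, hp₀, hp, hmax⟩ := exists_longest_trail hS
  set L : Multiset (Sym2 V) := ↑(walkEdges x p)
  have hcard : Multiset.card (S - L) < n := by
    rw [Multiset.card_sub hp, ← hn]
    have : 0 < Multiset.card L := by simpa [L, length_walkEdges, List.length_pos_iff] using hp₀
    have := Multiset.card_le_card hp
    omega
  obtain ⟨A₁, B₁, h₁⟩ := ih _ hcard (S - L) (fun e he => hloop e (Multiset.mem_of_le
    (Multiset.sub_le_self S L) he)) (hbip.imp_left (·.mono (Multiset.sub_le_self S L))) rfl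
  have h₂ := isBalancedSplit_alternating_walkEdges (fun e he => hloop e (Multiset.mem_of_le hp he))
    hk (hbip.imp_left (·.mono hp))
  rw [← tsub_add_cancel_of_le hp]
  refine h₁.exists_add h₂ fun v => ?_
  by_cases hv : v = x ∨ v = walkEnd x p
  · have hR : mdeg (S - L) v = 0 := mdeg_eq_zero fun e he hve => by
      rcases hv with rfl | rfl
      exacts [(notMem_of_mem_sub_walkEdges hp hmax he).1 hve,
        (notMem_of_mem_sub_walkEdges hp hmax he).2 hve]
    have := h₁.mdeg_add_mdeg v
    omega
  · have := mdeg_alternating_sub_mdeg_alternating x p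
      (fun e he => hloop e (Multiset.mem_of_le hp he)) v
    rw [if_neg (not_or.1 hv).1, if_neg (not_or.1 hv).2] at this
    omega

theorem IsBalancedSplit.card_add_left {k : ℤ} {S A B : Multiset (Sym2 V)}
    (h : IsBalancedSplit k S A B) (D : Multiset (Sym2 V)) :
    Multiset.card (D + A) = (Multiset.card (D + D + S) + 1) / 2 := by
  obtain ⟨rfl, h₁, h₂, -⟩ := h
  simp only [Multiset.card_add]
  omega

theorem IsBalancedSplit.card_add_right {k : ℤ} {S A B : Multiset (Sym2 V)}
    (h : IsBalancedSplit k S A B) (D : Multiset (Sym2 V)) :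
    Multiset.card (D + B) = Multiset.card (D + D + S) / 2 := by
  obtain ⟨rfl, h₁, h₂, -⟩ := h
  simp only [Multiset.card_add]
  omega

theorem IsBalancedSplit.exists_two_mul_mdeg_eq {k : ℤ} {S A B : Multiset (Sym2 V)}
    (h : IsBalancedSplit k S A B) (D : Multiset (Sym2 V)) (v : V) {F : Multiset (Sym2 V)}
    (hF : F = D + A ∨ F = D + B) :
    ∃ δ : ℤ, |δ| ≤ k ∧ 2 * (mdeg F v : ℤ) = mdeg (D + D + S) v + δ := by
  obtain ⟨rfl, -, -, hk⟩ := h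
  rcases hF with rfl | rfl
  · exact ⟨mdeg A v - mdeg B v, hk v, by simp only [mdeg_add]; push_cast; ring⟩
  · exact ⟨mdeg B v - mdeg A v, abs_sub_comm (α := ℤ) _ _ ▸ hk v, by
      simp only [mdeg_add]; push_cast; ring⟩

/-- Let `G = (V,E)` be a finite multigraph in which every edge has multiplicity at most two.
Then the edge multiset `E` can be partitioned into two simple edge sets `E₁` and `E₂` such that:
(P1) `|E₁| = ⌈|E|/2⌉` and `|E₂| = ⌊|E|/2⌋`;
(P2) for each `i ∈ {1,2}` and every vertex `v`, `d_G(v)/2 − 1 ≤ d_i(v) ≤ d_G(v)/2 + 1`;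
(P3) if `G` is bipartite then moreover `⌊d_G(v)/2⌋ ≤ d_i(v) ≤ ⌈d_G(v)/2⌉`. -/
theorem stmt_4 (E : Multiset (Sym2 V))
    (hdiag : ∀ e ∈ E, ¬ Sym2.IsDiag e)
    (hmult : ∀ e : Sym2 V, E.count e ≤ 2) :
    ∃ E₁ E₂ : Finset (Sym2 V),
      E₁.val + E₂.val = E ∧
      E₁.card = (Multiset.card E + 1) / 2 ∧
      E₂.card = Multiset.card E / 2 ∧
      (∀ v : V, ∀ F ∈ [E₁, E₂],
        (mdeg E v : ℝ) / 2 - 1 ≤ (fdeg F v : ℝ) ∧ (fdeg F v : ℝ) ≤ (mdeg E v : ℝ) / 2 + 1) ∧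
      (MultigraphBipartite E →
        ∀ v : V, ∀ F ∈ [E₁, E₂],
          mdeg E v / 2 ≤ fdeg F v ∧ fdeg F v ≤ (mdeg E v + 1) / 2) := by
  classical
  obtain ⟨D, S, hnd, rfl⟩ := Multiset.exists_add_add_eq_of_count_le_two hmult
  obtain ⟨k, hk₁, hk₂, hkS, hkE⟩ : ∃ k : ℤ, 1 ≤ k ∧ k ≤ 2 ∧ (MultigraphBipartite S ∨ 2 ≤ k) ∧
      (MultigraphBipartite (D + D + S) → k = 1) := by
    by_cases h : MultigraphBipartite (D + D + S)
    · exact ⟨1, le_rfl, by norm_num, Or.inl (h.mono (Multiset.le_add_left _ _)), fun _ => rfl⟩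
    · exact ⟨2, by norm_num, le_rfl, Or.inr le_rfl, fun h' => absurd h' h⟩
  obtain ⟨A, B, hsplit⟩ :=
    exists_isBalancedSplit hk₁ S (fun e he => hdiag e (Multiset.mem_add.2 (Or.inr he))) hkS
  have hS : A + B = S := hsplit.1
  have hnd₁ : (D + A).Nodup := Multiset.nodup_of_le (by simp [← hS, ← add_assoc]) hnd
  have hnd₂ : (D + B).Nodup := Multiset.nodup_of_le (by simp [← hS, add_left_comm _ A]) hnd
  have hdeg : ∀ v, ∀ F ∈ [(⟨D + A, hnd₁⟩ : Finset (Sym2 V)), ⟨D + B, hnd₂⟩],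
      ∃ δ : ℤ, |δ| ≤ k ∧ 2 * (fdeg F v : ℤ) = mdeg (D + D + S) v + δ := fun v F hF =>
    hsplit.exists_two_mul_mdeg_eq D v (by rcases List.mem_pair.1 hF with rfl | rfl <;> simp)
  refine ⟨⟨D + A, hnd₁⟩, ⟨D + B, hnd₂⟩, by simp [← hS]; abel, hsplit.card_add_left D,
    hsplit.card_add_right D, fun v F hF => ?_, fun hbip v F hF => ?_⟩
  · obtain ⟨δ, hδ, hF⟩ := hdeg v F hF
    have hF : (2 * fdeg F v : ℝ) = mdeg (D + D + S) v + δ := by exact_mod_cast hF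
    have hδ : |(δ : ℝ)| ≤ 2 := by exact_mod_cast hδ.trans hk₂
    rw [abs_le] at hδ
    constructor <;> linarith [hδ.1, hδ.2]
  · obtain ⟨δ, hδ, hF⟩ := hdeg v F hF
    rw [hkE hbip, abs_le] at hδ
    omega
end

section
/- Let x ∈ ℝ_{≥0}^E be a vector on the edges of a graph G=(V,E) with dyadic rational entries x_e = Σ_{i=0}^{L} (x_e)_i·2^{−i}, let E_i := supp_i(x) for 0 ≤ i ≤ L, let F_L := ∅, and let F_0, …, F_{L−1} ⊆ E satisfy |F_{i−1}| ≥ ⌈(|E_i| + |F_i|)/2⌉ for every 1 ≤ i ≤ L. Then the vectors x^{(i)} satisfy ‖x^{(i)}‖ ≥ ‖x^{(L)}‖ = ‖x‖ for every 0 ≤ i ≤ L. -/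
open Finset

variable {V : Type*} [Fintype V] [DecidableEq V]

/-- `x^{(i)}_e := 1[e ∈ F_i]·2^{−i} + Σ_{j=0}^{i} 1[e ∈ E_j]·2^{−j}`. -/
noncomputable def xvec (E F : ℕ → Finset (Sym2 V)) (i : ℕ) : Sym2 V → ℝ := fun e =>
  (if e ∈ F i then ((2 : ℝ) ^ i)⁻¹ else 0) +
    ∑ j ∈ Finset.range (i + 1), if e ∈ E j then ((2 : ℝ) ^ j)⁻¹ else 0

lemma vnorm_xvec (E F : ℕ → Finset (Sym2 V)) (i : ℕ) :
    vnorm (xvec E F i) =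
      (F i).card * ((2 : ℝ) ^ i)⁻¹ +
        ∑ j ∈ Finset.range (i + 1), (E j).card * ((2 : ℝ) ^ j)⁻¹ := by
  unfold vnorm xvec
  rw [Finset.sum_add_distrib]
  congr 1
  · rw [Finset.sum_ite_mem, Finset.univ_inter, Finset.sum_const, nsmul_eq_mul]
  · rw [Finset.sum_comm]
    refine Finset.sum_congr rfl fun j _ => ?_
    rw [Finset.sum_ite_mem, Finset.univ_inter, Finset.sum_const, nsmul_eq_mul]

/-- Let `x ∈ ℝ_{≥0}^E` have dyadic entries `x_e = Σ_{i=0}^{L} (x_e)_i·2^{−i}` with binary digits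
`d e i ∈ {0,1}`, let `E_i := supp_i(x)`, `F_L := ∅`, and let `F_0, …, F_{L−1}` satisfy
`|F_{i−1}| ≥ ⌈(|E_i| + |F_i|)/2⌉` for every `1 ≤ i ≤ L`.  Then
`‖x^{(i)}‖ ≥ ‖x^{(L)}‖ = ‖x‖` for every `0 ≤ i ≤ L`. -/
theorem stmt_6 (x : Sym2 V → ℝ) (L : ℕ) (d : Sym2 V → ℕ → ℕ)
    (hd : ∀ e i, d e i ≤ 1)
    (hx : ∀ e, x e = ∑ i ∈ Finset.range (L + 1), (d e i : ℝ) / 2 ^ i)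
    (E F : ℕ → Finset (Sym2 V))
    (hE : ∀ i, E i = Finset.univ.filter (fun e => d e i = 1))
    (hFL : F L = ∅)
    (hF : ∀ i, 1 ≤ i → i ≤ L → ((E i).card + (F i).card + 1) / 2 ≤ (F (i - 1)).card) :
    (∀ i ≤ L, vnorm (xvec E F L) ≤ vnorm (xvec E F i)) ∧
      vnorm (xvec E F L) = vnorm x := by
  have step : ∀ i, i + 1 ≤ L → vnorm (xvec E F (i + 1)) ≤ vnorm (xvec E F i) := by
    intro i hi
    have hcard : (E (i + 1)).card + (F (i + 1)).card ≤ 2 * (F i).card := by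
      have h := hF (i + 1) (Nat.le_add_left 1 i) hi
      simp only [Nat.add_sub_cancel] at h
      omega
    rw [vnorm_xvec, vnorm_xvec, Finset.sum_range_succ]
    have hpos : (0 : ℝ) < 2 ^ i := by positivity
    have hc : ((E (i + 1)).card : ℝ) + (F (i + 1)).card ≤ 2 * (F i).card := by
      exact_mod_cast hcard
    have : ((F (i + 1)).card : ℝ) * ((2 : ℝ) ^ (i + 1))⁻¹ +
        ((E (i + 1)).card : ℝ) * ((2 : ℝ) ^ (i + 1))⁻¹ ≤
        ((F i).card : ℝ) * ((2 : ℝ) ^ i)⁻¹ := by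
      have hinv : (0 : ℝ) < ((2 : ℝ) ^ i)⁻¹ := inv_pos.mpr hpos
      have key := mul_le_mul_of_nonneg_right hc hinv.le
      rw [pow_succ, mul_inv]
      nlinarith [key]
    linarith
  have anti : ∀ j, j ≤ L → ∀ i, i ≤ j → vnorm (xvec E F j) ≤ vnorm (xvec E F i) := by
    intro j
    induction j with
    | zero => intro _ i hi; interval_cases i; exact le_refl _
    | succ n ih =>
      intro hjL i hi
      rcases Nat.eq_or_lt_of_le hi with h | h
      · simp [h]
      · exact le_trans (step n hjL) (ih (Nat.le_of_succ_le hjL) i (Nat.lt_succ_iff.mp h))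
  constructor
  · intro i hi; exact anti L le_rfl i hi
  · rw [vnorm_xvec, hFL]
    simp only [Finset.card_empty, Nat.cast_zero, zero_mul, zero_add]
    unfold vnorm
    refine Eq.symm ?_
    calc ∑ e : Sym2 V, x e
        = ∑ e : Sym2 V, ∑ j ∈ Finset.range (L + 1), (d e j : ℝ) / 2 ^ j :=
          Finset.sum_congr rfl fun e _ => hx e
      _ = ∑ j ∈ Finset.range (L + 1), ∑ e : Sym2 V, (d e j : ℝ) / 2 ^ j :=
          Finset.sum_comm
      _ = ∑ j ∈ Finset.range (L + 1), (E j).card * ((2 : ℝ) ^ j)⁻¹ := by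
          refine Finset.sum_congr rfl fun j _ => ?_
          rw [hE j, Finset.card_filter]
          push_cast
          rw [Finset.sum_mul]
          refine Finset.sum_congr rfl fun e _ => ?_
          have := hd e j
          interval_cases h : d e j <;> simp [div_eq_mul_inv]
end

section
/- Let x ∈ ℝ_{≥0}^E have dyadic rational entries x_e = Σ_{i=0}^{L} (x_e)_i·2^{−i}, let E_i := supp_i(x) for 0 ≤ i ≤ L, let F_L := ∅, and let F_0, …, F_{L−1} ⊆ E satisfy |F_{i−1}| ≤ ⌈(|E_i| + |F_i|)/2⌉ for every 1 ≤ i ≤ L. Then |F_i| ≤ ⌈2^{i} · Σ_{j=i+1}^{L} |E_j|·2^{−j}⌉ ≤ 1 + 2^{i}·‖x‖ for every 0 ≤ i ≤ L. -/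
/-!
Put `t_i := 2^i · Σ_{j=i+1}^{L} |E_j|·2^{−j}`. Then `t_L = 0` and `t_{i-1} = (|E_i| + t_i)/2`,
so the recursion `|F_{i−1}| ≤ ⌈(|E_i| + |F_i|)/2⌉` propagates `|F_i| ≤ ⌈t_i⌉` downwards from
`i = L`, because an integer upper bound on `|F_i|` may replace `t_i` inside the ceiling.
Finally `t_i ≤ 2^i‖x‖`, since every `e ∈ E_j` contributes `2^{-j}` to `x_e`.
-/

open Finset

variable {V : Type*} [Fintype V] [DecidableEq V]

noncomputable def dyadicTail (a : ℕ → ℝ) (L i : ℕ) : ℝ :=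
  2 ^ i * ∑ j ∈ Icc (i + 1) L, a j / 2 ^ j

lemma dyadicTail_self (a : ℕ → ℝ) (L : ℕ) : dyadicTail a L L = 0 := by
  simp [dyadicTail]

lemma dyadicTail_eq_half (a : ℕ → ℝ) {L i : ℕ} (hi : i < L) :
    dyadicTail a L i = (a (i + 1) + dyadicTail a L (i + 1)) / 2 := by
  rw [dyadicTail, dyadicTail, ← insert_Icc_add_one_left_eq_Icc (Nat.succ_le_of_lt hi),
    sum_insert (by simp)]
  generalize ∑ j ∈ Icc (i + 1 + 1) L, a j / 2 ^ j = s
  rw [pow_succ]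
  field_simp

lemma dyadicTail_le (a : ℕ → ℝ) (ha : ∀ j, 0 ≤ a j) (L i : ℕ) :
    dyadicTail a L i ≤ 2 ^ i * ∑ j ∈ range (L + 1), a j / 2 ^ j := by
  refine mul_le_mul_of_nonneg_left (sum_le_sum_of_subset_of_nonneg ?_ ?_) (by positivity)
  · intro j hj
    simp only [mem_Icc, mem_range] at hj ⊢
    omega
  · intro j _ _
    exact div_nonneg (ha j) (by positivity)

lemma le_ceil_half_of_two_mul_le {f f' e : ℤ} {t : ℝ} (hf' : f' ≤ ⌈t⌉)
    (hf : 2 * f ≤ e + f' + 1) : f ≤ ⌈(e + t) / 2⌉ := by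
  have ht : f' ≤ 2 * ⌈(e + t) / 2⌉ - e := by
    refine hf'.trans (Int.ceil_le.mpr ?_)
    push_cast
    linarith [Int.le_ceil ((e + t) / 2)]
  omega

theorem le_ceil_dyadicTail {f e : ℕ → ℕ} {L : ℕ} (hfL : f L = 0)
    (hf : ∀ i, 1 ≤ i → i ≤ L → f (i - 1) ≤ (e i + f i + 1) / 2) {i : ℕ} (hi : i ≤ L) :
    (f i : ℤ) ≤ ⌈dyadicTail (fun j => (e j : ℝ)) L i⌉ := by
  induction hi using Nat.decreasingInduction with
  | self => simp [hfL, dyadicTail_self]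
  | of_succ k hk ih =>
    rw [dyadicTail_eq_half _ hk]
    have hstep := hf (k + 1) (by omega) hk
    simp only [Nat.add_sub_cancel] at hstep
    exact_mod_cast le_ceil_half_of_two_mul_le ih (by omega)

lemma sum_card_filter_eq_one_div_pow_le {α : Type*} [Fintype α] (d : α → ℕ → ℕ) (s : Finset ℕ) :
    ∑ j ∈ s, ((univ.filter fun a => d a j = 1).card : ℝ) / 2 ^ j ≤
      ∑ a, ∑ j ∈ s, (d a j : ℝ) / 2 ^ j := by
  rw [sum_comm]
  refine sum_le_sum fun j _ => ?_
  rw [← sum_div, card_filter]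
  push_cast
  gcongr with a
  split_ifs with h <;> simp [h]

theorem stmt_9_general (x : Sym2 V → ℝ) (L : ℕ) (d : Sym2 V → ℕ → ℕ)
    (hx : ∀ e, x e = ∑ i ∈ Finset.range (L + 1), (d e i : ℝ) / 2 ^ i)
    (E F : ℕ → Finset (Sym2 V))
    (hE : ∀ i, E i = Finset.univ.filter (fun e => d e i = 1))
    (hFL : F L = ∅)
    (hF : ∀ i, 1 ≤ i → i ≤ L → (F (i - 1)).card ≤ ((E i).card + (F i).card + 1) / 2) :
    ∀ i ≤ L,
      ((F i).card : ℝ) ≤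
        ((⌈(2 : ℝ) ^ i * ∑ j ∈ Finset.Icc (i + 1) L, ((E j).card : ℝ) / 2 ^ j⌉ : ℤ) : ℝ) ∧
      ((⌈(2 : ℝ) ^ i * ∑ j ∈ Finset.Icc (i + 1) L, ((E j).card : ℝ) / 2 ^ j⌉ : ℤ) : ℝ) ≤
        1 + 2 ^ i * vnorm x := by
  intro i hi
  set t := dyadicTail (fun j => ((E j).card : ℝ)) L i
  change ((F i).card : ℝ) ≤ (⌈t⌉ : ℝ) ∧ (⌈t⌉ : ℝ) ≤ 1 + 2 ^ i * vnorm x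
  have hcard : (F i).card ≤ ⌈t⌉ :=
    le_ceil_dyadicTail (f := fun j => (F j).card) (by simp [hFL]) hF hi
  have hnorm : ∑ j ∈ range (L + 1), ((E j).card : ℝ) / 2 ^ j ≤ vnorm x := by
    simpa only [hE, vnorm, hx] using sum_card_filter_eq_one_div_pow_le d (range (L + 1))
  have htail : t ≤ 2 ^ i * vnorm x :=
    (dyadicTail_le _ (fun j => Nat.cast_nonneg _) L i).trans
      (mul_le_mul_of_nonneg_left hnorm (by positivity))
  exact ⟨by exact_mod_cast hcard, by linarith [Int.ceil_lt_add_one t]⟩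

/-- Let `x ∈ ℝ_{≥0}^E` have dyadic entries `x_e = Σ_{i=0}^{L} (x_e)_i·2^{−i}`, let
`E_i := supp_i(x)`, `F_L := ∅`, and let `F_0, …, F_{L−1}` satisfy
`|F_{i−1}| ≤ ⌈(|E_i| + |F_i|)/2⌉` for every `1 ≤ i ≤ L`.  Then
`|F_i| ≤ ⌈2^{i} · Σ_{j=i+1}^{L} |E_j|·2^{−j}⌉ ≤ 1 + 2^{i}·‖x‖` for every `0 ≤ i ≤ L`. -/
theorem stmt_9 (x : Sym2 V → ℝ) (L : ℕ) (d : Sym2 V → ℕ → ℕ)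
    (hd : ∀ e i, d e i ≤ 1)
    (hx : ∀ e, x e = ∑ i ∈ Finset.range (L + 1), (d e i : ℝ) / 2 ^ i)
    (E F : ℕ → Finset (Sym2 V))
    (hE : ∀ i, E i = Finset.univ.filter (fun e => d e i = 1))
    (hFL : F L = ∅)
    (hF : ∀ i, 1 ≤ i → i ≤ L → (F (i - 1)).card ≤ ((E i).card + (F i).card + 1) / 2) :
    ∀ i ≤ L,
      ((F i).card : ℝ) ≤
        ((⌈(2 : ℝ) ^ i * ∑ j ∈ Finset.Icc (i + 1) L, ((E j).card : ℝ) / 2 ^ j⌉ : ℤ) : ℝ) ∧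
      ((⌈(2 : ℝ) ^ i * ∑ j ∈ Finset.Icc (i + 1) L, ((E j).card : ℝ) / 2 ^ j⌉ : ℤ) : ℝ) ≤
        1 + 2 ^ i * vnorm x :=
  stmt_9_general x L d hx E F hE hFL hF
end

section
/- Let ε ∈ [0,1] and δ > 0, and let x be an (ε,δ)-almost-maximal fractional matching ((ε,δ)-AMFM) of a graph G=(V,E) whose minimum nonzero entry satisfies min{x_e : x_e > 0} ≥ δ. Then the subgraph K = (V, supp(x)) is an (ε, δ^{−1})-kernel of G. -/
open Finset

variable {V : Type*} [Fintype V] [DecidableEq V]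

/-- Degree of `v` in the subgraph `K = (V, supp(x))`. -/
noncomputable def suppDeg (x : Sym2 V → ℝ) (v : V) : ℕ :=
  (Finset.univ.filter (fun e : Sym2 V => x e ≠ 0 ∧ v ∈ e)).card

lemma fracDeg_eq_sum (x : Sym2 V → ℝ) (v : V) :
    fracDeg x v = ∑ e ∈ Finset.univ.filter (fun e : Sym2 V => x e ≠ 0 ∧ v ∈ e), x e := by
  classical
  rw [fracDeg, ← Finset.sum_filter]
  symm
  apply Finset.sum_subset
  · intro e he
    simp only [mem_filter] at he ⊢
    exact ⟨he.1, he.2.2⟩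
  · intro e he hne
    simp only [mem_filter, mem_univ, true_and, not_and] at he hne
    by_contra h
    exact hne h he

/-- Let `ε ∈ [0,1]`, `δ > 0`, and let `x` be an `(ε,δ)`-almost-maximal fractional matching
(`(ε,δ)`-AMFM) of `G = (V,E)` whose minimum nonzero entry is at least `δ`.  Then the subgraph
`K = (V, supp(x))` is an `(ε, δ^{−1})`-kernel of `G`: every vertex has degree at most `δ⁻¹` in
`K`, and every edge of `E \ supp(x)` has an endpoint of degree at least `δ⁻¹·(1−ε)` in `K`. -/
theorem stmt_16 (G : SimpleGraph V) (ε δ : ℝ) (hε0 : 0 ≤ ε) (hε1 : ε ≤ 1) (hδ : 0 < δ)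
    (x : Sym2 V → ℝ)
    (hxnn : ∀ e, 0 ≤ x e) (hsupp : ∀ e, x e ≠ 0 → e ∈ G.edgeSet)
    (hfm : ∀ v, fracDeg x v ≤ 1)
    (hAMFM : ∀ e ∈ G.edgeSet, δ ≤ x e ∨
      ∃ v : V, v ∈ e ∧ 1 - ε ≤ fracDeg x v ∧ ∀ f ∈ G.edgeSet, v ∈ f → x f ≤ δ)
    (hmin : ∀ e, x e ≠ 0 → δ ≤ x e) :
    (∀ v : V, (suppDeg x v : ℝ) ≤ δ⁻¹) ∧
    (∀ e ∈ G.edgeSet, x e = 0 → ∃ v : V, v ∈ e ∧ δ⁻¹ * (1 - ε) ≤ (suppDeg x v : ℝ)) := by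
  classical
  constructor
  · intro v
    rw [inv_eq_one_div, le_div_iff₀ hδ]
    calc (suppDeg x v : ℝ) * δ
        = ∑ _e ∈ Finset.univ.filter (fun e : Sym2 V => x e ≠ 0 ∧ v ∈ e), δ := by
          rw [Finset.sum_const, suppDeg, nsmul_eq_mul]
      _ ≤ ∑ e ∈ Finset.univ.filter (fun e : Sym2 V => x e ≠ 0 ∧ v ∈ e), x e := by
          apply Finset.sum_le_sum
          intro e he
          exact hmin e (Finset.mem_filter.mp he).2.1
      _ = fracDeg x v := (fracDeg_eq_sum x v).symm
      _ ≤ 1 := hfm v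
  · intro e heG hxe
    rcases hAMFM e heG with h | ⟨v, hv, hfd, hmax⟩
    · exact absurd h (by rw [hxe]; exact not_le.mpr hδ)
    · refine ⟨v, hv, ?_⟩
      rw [inv_eq_one_div, div_mul_eq_mul_div, div_le_iff₀ hδ, one_mul]
      calc 1 - ε ≤ fracDeg x v := hfd
        _ = ∑ f ∈ Finset.univ.filter (fun f : Sym2 V => x f ≠ 0 ∧ v ∈ f), x f :=
          fracDeg_eq_sum x v
        _ ≤ ∑ _f ∈ Finset.univ.filter (fun f : Sym2 V => x f ≠ 0 ∧ v ∈ f), δ := by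
          apply Finset.sum_le_sum
          intro f hf
          obtain ⟨hfne, hvf⟩ := (Finset.mem_filter.mp hf).2
          exact hmax f (hsupp f hfne) hvf
        _ = (suppDeg x v : ℝ) * δ := by
          rw [Finset.sum_const, suppDeg, nsmul_eq_mul]
end

section
/- Let ε ∈ [0,1], α > 0, and let x be a fractional matching in a graph G=(V,E) that is ε-restricted (x_e ∈ [0,ε] ∪ {1} for every edge e) and satisfies ‖x‖ ≥ α·μ(G). Then supp(x) contains a matching M with |M| ≥ α·(1−ε)·μ(G). -/
open Finset

variable {V : Type*} [Fintype V] [DecidableEq V]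

/-- `μ(G)`: the maximum size of a matching in `G`. -/
noncomputable def matchNum (G : SimpleGraph V) : ℕ :=
  sSup {n | ∃ M : Finset (Sym2 V), (∀ e ∈ M, e ∈ G.edgeSet) ∧ IsMatchingSet M ∧ M.card = n}

open scoped Classical
set_option linter.unusedSectionVars false

lemma IsMatchingSet.subset {M M' : Finset (Sym2 V)} (h : IsMatchingSet M) (hs : M' ⊆ M) :
    IsMatchingSet M' :=
  ⟨fun e he => h.1 e (hs he), fun e he f hf hne v hv => h.2 e (hs he) f (hs hf) hne v hv⟩

lemma IsMatchingSet.eq_of_mem {M : Finset (Sym2 V)} (h : IsMatchingSet M) {e f : Sym2 V} {v : V}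
    (he : e ∈ M) (hf : f ∈ M) (hve : v ∈ e) (hvf : v ∈ f) : e = f := by
  by_contra hne
  exact h.2 e he f hf hne v hve hvf

lemma IsMatchingSet.insert' {M : Finset (Sym2 V)} {e : Sym2 V} (h : IsMatchingSet M)
    (hnd : ¬ e.IsDiag) (hdisj : ∀ f ∈ M, ∀ v, v ∈ e → v ∉ f) :
    IsMatchingSet (insert e M) := by
  constructor
  · intro f hf
    rcases Finset.mem_insert.mp hf with rfl | hf
    · exact hnd
    · exact h.1 f hf
  · intro a ha b hb hne v hva hvb
    rcases Finset.mem_insert.mp ha with h1 | h1 <;> rcases Finset.mem_insert.mp hb with h2 | h2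
    · exact hne (h1.trans h2.symm)
    · subst h1; exact hdisj b h2 v hva hvb
    · subst h2; exact hdisj a h1 v hvb hva
    · exact h.2 a h1 b h2 hne v hva hvb

lemma IsMatchingSet.erase {M : Finset (Sym2 V)} (h : IsMatchingSet M) (e : Sym2 V) :
    IsMatchingSet (M.erase e) :=
  h.subset (Finset.erase_subset _ _)

lemma sym2_ne_of_mem {e : Sym2 V} (hnd : ¬ e.IsDiag) {a b : V} (ha : a ∈ e) (hb : b ∈ e)
    (hab : a ≠ b) : e = s(a, b) := by
  induction e with
  | _ x y =>
    rw [Sym2.mem_iff] at ha hb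
    rcases ha with rfl | rfl <;> rcases hb with rfl | rfl
    · exact absurd rfl hab
    · rfl
    · exact Sym2.eq_swap
    · exact absurd rfl hab

lemma mem_other_exists {e : Sym2 V} {v : V} (hv : v ∈ e) : ∃ u, e = s(v, u) :=
  Sym2.mem_iff_exists.mp hv

lemma ne_of_not_isDiag {a b : V} (h : ¬ (s(a, b) : Sym2 V).IsDiag) : a ≠ b := by
  simpa [Sym2.isDiag_iff_proj_eq] using h

/-- existence of a maximum matching inside an edge finset. -/
lemma exists_max_matching (E : Finset (Sym2 V)) :
    ∃ M, M ⊆ E ∧ IsMatchingSet M ∧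
      ∀ M', M' ⊆ E → IsMatchingSet M' → M'.card ≤ M.card := by
  have hne : (E.powerset.filter (fun M => IsMatchingSet M)).Nonempty := by
    refine ⟨∅, ?_⟩
    simp only [Finset.mem_filter, Finset.mem_powerset]
    exact ⟨Finset.empty_subset _, ⟨fun e he => absurd he (Finset.notMem_empty e),
      fun e he => absurd he (Finset.notMem_empty e)⟩⟩
  obtain ⟨M, hM, hmax⟩ := Finset.exists_max_image _ Finset.card hne
  simp only [Finset.mem_filter, Finset.mem_powerset] at hM
  refine ⟨M, hM.1, hM.2, fun M' hM'E hM' => ?_⟩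
  exact hmax M' (by simp [Finset.mem_filter, Finset.mem_powerset, hM'E, hM'])

/-- Key alternating-path swap lemma, phrased via finset invariants. -/
lemma rec_lemma (E M N : Finset (Sym2 V)) (hM : IsMatchingSet M) (hN : IsMatchingSet N)
    (hME : M ⊆ E) (hNE : N ⊆ E)
    (hNmax : ∀ M', M' ⊆ E → IsMatchingSet M' → M'.card ≤ N.card)
    (z u w yu yw : V) (gu gw : Sym2 V)
    (hzN : ∀ e ∈ N, z ∉ e)
    (hu : ∀ e ∈ M, u ∉ e) (hw : ∀ e ∈ M, w ∉ e)
    (hfu : s(u, yu) ∈ N) (hfw : s(w, yw) ∈ N)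
    (hyuyw : yu ≠ yw)
    (hgu : gu ∈ M) (hyugu : yu ∈ gu) (hguN : gu ∉ N)
    (hgw : gw ∈ M) (hywgw : yw ∈ gw) (hgwN : gw ∉ N) :
    ∀ (n : ℕ) (A B : Finset (Sym2 V)) (g h : V),
      (A \ N).card = n →
      IsMatchingSet A → A ⊆ M ∪ N → A.card + 1 = M.card →
      (∀ e ∈ A, z ∉ e) → (∀ e ∈ A, h ∉ e) → h ≠ z →
      s(g, h) ∈ M → s(g, h) ∉ N →
      M ∩ N ⊆ A →
      IsMatchingSet B → B ⊆ M ∪ N → B.card = N.card →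
      (∀ e ∈ B, g ∉ e) →
      (∀ e ∈ B, e ∉ N → ∀ v ∈ e, v = z ∨ ∃ a ∈ A, a ∈ N ∧ v ∈ a) →
      (g = z ∨ ∃ a ∈ A, a ∈ N ∧ g ∈ a) →
      ((gu ∈ A ∧ gw ∈ A) ∨ (gw ∈ A ∧ h = yu) ∨ (gu ∈ A ∧ h = yw)) →
      ∃ M', M' ⊆ E ∧ IsMatchingSet M' ∧ M'.card = M.card ∧ (∀ e ∈ M', z ∉ e) ∧
        (M ∩ N).card < (M ∩ M').card := by
  have hMNE : M ∪ N ⊆ E := Finset.union_subset hME hNE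
  have huyu : u ≠ yu := ne_of_not_isDiag (hN.1 _ hfu)
  have hwyw : w ≠ yw := ne_of_not_isDiag (hN.1 _ hfw)
  intro n
  induction n using Nat.strong_induction_on with
  | _ n IH =>
  intro A B g h hn hA hAMN hAcard hAz hAh hhz hghM hghN hMNA hB hBMN hBcard hBg hB3 hgz h6
  have hgh_nd : ¬ (s(g, h)).IsDiag := hM.1 _ hghM
  have hgne : g ≠ h := ne_of_not_isDiag hgh_nd
  -- every B-edge through h lies in N
  have haux : ∀ b ∈ B, h ∈ b → b ∈ N := by
    intro b hb hhb
    by_contra hbN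
    rcases hB3 b hb hbN h hhb with h1 | ⟨a, haA, _, hha⟩
    · exact hhz h1
    · exact hAh a haA hha
  by_cases hc : ∃ f ∈ B, h ∈ f
  case neg =>
    -- h is B-free : contradiction by inserting s(g,h) into B
    exfalso
    have hghB : ∀ f ∈ B, ∀ v, v ∈ s(g, h) → v ∉ f := by
      intro f hf v hv hvf
      rw [Sym2.mem_iff] at hv
      rcases hv with rfl | rfl
      · exact hBg f hf hvf
      · exact hc ⟨f, hf, hvf⟩
    have hB' : IsMatchingSet (insert s(g, h) B) := hB.insert' hgh_nd hghB
    have hsub : insert s(g, h) B ⊆ E :=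
      Finset.insert_subset (hME hghM) (fun b hb => hMNE (hBMN hb))
    have hcard' := hNmax _ hsub hB'
    have hnotmem : s(g, h) ∉ B := fun hmem => hBg _ hmem (Sym2.mem_mk_left g h)
    rw [Finset.card_insert_of_notMem hnotmem, hBcard] at hcard'
    omega
  case pos =>
    obtain ⟨f, hfB, hhf⟩ := hc
    have hfN : f ∈ N := haux f hfB hhf
    obtain ⟨h', hfeq⟩ := mem_other_exists hhf
    have hfnd : ¬ f.IsDiag := hN.1 f hfN
    have hhh' : h ≠ h' := by rw [hfeq] at hfnd; exact ne_of_not_isDiag hfnd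
    have hh'f : h' ∈ f := by rw [hfeq]; exact Sym2.mem_mk_right h h'
    have hfM : f ∉ M := by
      intro hfM'
      have : s(g, h) = f := hM.eq_of_mem hghM hfM' (Sym2.mem_mk_right g h) hhf
      exact hghN (this ▸ hfN)
    have hzf : z ∉ f := hzN f hfN
    have hh'z : h' ≠ z := fun hEq => hzf (hEq ▸ hh'f)
    by_cases hcA : ∃ e' ∈ A, h' ∈ e'
    case neg =>
      -- terminal case : M' = insert f A is a maximum matching missing z
      have hfA : f ∉ A := fun hmem => hAh f hmem hhf
      have hdisj : ∀ a ∈ A, ∀ v, v ∈ f → v ∉ a := by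
        intro a ha v hv hva
        rw [hfeq, Sym2.mem_iff] at hv
        rcases hv with rfl | rfl
        · exact hAh a ha hva
        · exact hcA ⟨a, ha, hva⟩
      have hM' : IsMatchingSet (insert f A) := hA.insert' hfnd hdisj
      have hsub : insert f A ⊆ E :=
        Finset.insert_subset (hNE hfN) (fun a ha => hMNE (hAMN ha))
      have hcard' : (insert f A).card = M.card := by
        rw [Finset.card_insert_of_notMem hfA]; exact hAcard
      have hmiss : ∀ e ∈ insert f A, z ∉ e := by
        intro e he
        rcases Finset.mem_insert.mp he with rfl | he
        · exact hzf
        · exact hAz e he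
      obtain ⟨gx, hgxA, hgxM, hgxN⟩ :
          ∃ gx, gx ∈ A ∧ gx ∈ M ∧ gx ∉ N := by
        rcases h6 with ⟨h1, _⟩ | ⟨h1, _⟩ | ⟨h1, _⟩
        · exact ⟨gu, h1, hgu, hguN⟩
        · exact ⟨gw, h1, hgw, hgwN⟩
        · exact ⟨gu, h1, hgu, hguN⟩
      refine ⟨insert f A, hsub, hM', hcard', hmiss, ?_⟩
      have hss : insert gx (M ∩ N) ⊆ M ∩ insert f A := by
        intro a ha
        rcases Finset.mem_insert.mp ha with rfl | ha
        · exact Finset.mem_inter.mpr ⟨hgxM, Finset.mem_insert_of_mem hgxA⟩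
        · exact Finset.mem_inter.mpr ⟨(Finset.mem_inter.mp ha).1,
            Finset.mem_insert_of_mem (hMNA ha)⟩
      have hnm : gx ∉ M ∩ N := fun hmem => hgxN (Finset.mem_inter.mp hmem).2
      calc (M ∩ N).card < (insert gx (M ∩ N)).card := by
            rw [Finset.card_insert_of_notMem hnm]; omega
        _ ≤ (M ∩ insert f A).card := Finset.card_le_card hss
    case pos =>
      obtain ⟨e', he'A, hh'e'⟩ := hcA
      have he'N : e' ∉ N := by
        intro he'N'
        have : e' = f := hN.eq_of_mem he'N' hfN hh'e' hh'f
        subst this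
        exact hAh e' he'A hhf
      have he'M : e' ∈ M := (Finset.mem_union.mp (hAMN he'A)).resolve_right he'N
      obtain ⟨h'', he'eq⟩ := mem_other_exists hh'e'
      have he'nd : ¬ e'.IsDiag := hA.1 e' he'A
      have hh'h'' : h' ≠ h'' := by rw [he'eq] at he'nd; exact ne_of_not_isDiag he'nd
      have hh''e' : h'' ∈ e' := by rw [he'eq]; exact Sym2.mem_mk_right h' h''
      -- the second and third disjuncts of h6 are impossible here
      have h6'' : gu ∈ A ∧ gw ∈ A := by
        rcases h6 with h6 | ⟨_, heq⟩ | ⟨_, heq⟩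
        · exact h6
        · -- h = yu
          have hfe : f = s(u, yu) :=
            hN.eq_of_mem hfN hfu (heq ▸ hhf) (Sym2.mem_mk_right u yu)
          rw [hfeq] at hfe
          rcases Sym2.eq_iff.mp hfe with ⟨h1, _⟩ | ⟨_, h2⟩
          · refine absurd ?_ (hu _ hghM)
            rw [← h1]; exact Sym2.mem_mk_right g h
          · exact absurd (h2 ▸ hh'e') (hu e' he'M)
        · -- h = yw
          have hfe : f = s(w, yw) :=
            hN.eq_of_mem hfN hfw (heq ▸ hhf) (Sym2.mem_mk_right w yw)
          rw [hfeq] at hfe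
          rcases Sym2.eq_iff.mp hfe with ⟨h1, _⟩ | ⟨_, h2⟩
          · refine absurd ?_ (hw _ hghM)
            rw [← h1]; exact Sym2.mem_mk_right g h
          · exact absurd (h2 ▸ hh'e') (hw e' he'M)
      -- new state
      set A' := insert f (A.erase e') with hA'def
      set B' := insert s(g, h) (B.erase f) with hB'def
      have hApos : 0 < A.card := Finset.card_pos.mpr ⟨e', he'A⟩
      have hfA : f ∉ A.erase e' := fun hmem => hAh f (Finset.erase_subset _ _ hmem) hhf
      have hghB : s(g, h) ∉ B.erase f := fun hmem =>
        hBg _ (Finset.erase_subset _ _ hmem) (Sym2.mem_mk_left g h)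
      -- measure decreases
      have he'AN : e' ∈ A \ N := Finset.mem_sdiff.mpr ⟨he'A, he'N⟩
      have hmeas : (A' \ N).card < n := by
        have hEq : A' \ N = (A \ N).erase e' := by
          ext a
          simp only [hA'def, Finset.mem_sdiff, Finset.mem_insert, Finset.mem_erase]
          constructor
          · rintro ⟨rfl | ⟨hne, ha⟩, hnN⟩
            · exact absurd hfN hnN
            · exact ⟨hne, ha, hnN⟩
          · rintro ⟨hne, ha, hnN⟩
            exact ⟨Or.inr ⟨hne, ha⟩, hnN⟩
        have hpos : 0 < n := hn ▸ Finset.card_pos.mpr ⟨e', he'AN⟩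
        rw [hEq, Finset.card_erase_of_mem he'AN, hn]
        omega
      -- invariants for the new state
      have hA'm : IsMatchingSet A' := by
        refine (hA.erase e').insert' hfnd ?_
        intro a ha v hv hva
        rw [hfeq, Sym2.mem_iff] at hv
        have haA : a ∈ A := Finset.erase_subset _ _ ha
        have hane : a ≠ e' := (Finset.mem_erase.mp ha).1
        rcases hv with rfl | rfl
        · exact hAh a haA hva
        · exact hane (hA.eq_of_mem haA he'A hva hh'e')
      have hA'MN : A' ⊆ M ∪ N := by
        refine Finset.insert_subset (Finset.mem_union_right _ hfN) ?_
        exact fun a ha => hAMN (Finset.erase_subset _ _ ha)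
      have hA'card : A'.card + 1 = M.card := by
        rw [hA'def, Finset.card_insert_of_notMem hfA, Finset.card_erase_of_mem he'A]
        omega
      have hA'z : ∀ e ∈ A', z ∉ e := by
        intro e he
        rcases Finset.mem_insert.mp he with rfl | he
        · exact hzf
        · exact hAz e (Finset.erase_subset _ _ he)
      have hA'h : ∀ e ∈ A', h'' ∉ e := by
        intro e he hmem
        rcases Finset.mem_insert.mp he with rfl | he
        · rw [hfeq, Sym2.mem_iff] at hmem
          rcases hmem with rfl | rfl
          · exact hAh e' he'A hh''e'
          · exact hh'h'' rfl
        · have haA : e ∈ A := Finset.erase_subset _ _ he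
          have hane : e ≠ e' := (Finset.mem_erase.mp he).1
          exact hane (hA.eq_of_mem haA he'A hmem hh''e')
      have hh''z : h'' ≠ z := fun hEq => hAz e' he'A (hEq ▸ hh''e')
      have hghM' : s(h', h'') ∈ M := he'eq ▸ he'M
      have hghN' : s(h', h'') ∉ N := he'eq ▸ he'N
      have hMNA' : M ∩ N ⊆ A' := by
        intro a ha
        have haN : a ∈ N := (Finset.mem_inter.mp ha).2
        have hane : a ≠ e' := fun hEq => he'N (hEq ▸ haN)
        exact Finset.mem_insert_of_mem (Finset.mem_erase.mpr ⟨hane, hMNA ha⟩)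
      have hB'm : IsMatchingSet B' := by
        refine (hB.erase f).insert' hgh_nd ?_
        intro b hb v hv hvb
        have hbB : b ∈ B := Finset.erase_subset _ _ hb
        have hbne : b ≠ f := (Finset.mem_erase.mp hb).1
        rw [Sym2.mem_iff] at hv
        rcases hv with rfl | rfl
        · exact hBg b hbB hvb
        · exact hbne (hN.eq_of_mem (haux b hbB hvb) hfN hvb hhf)
      have hB'MN : B' ⊆ M ∪ N := by
        refine Finset.insert_subset (Finset.mem_union_left _ hghM) ?_
        exact fun b hb => hBMN (Finset.erase_subset _ _ hb)
      have hB'card : B'.card = N.card := by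
        rw [hB'def, Finset.card_insert_of_notMem hghB, Finset.card_erase_of_mem hfB, hBcard]
        have : 0 < N.card := Finset.card_pos.mpr ⟨f, hfN⟩
        omega
      have hB'g : ∀ e ∈ B', h' ∉ e := by
        intro e he hmem
        rcases Finset.mem_insert.mp he with rfl | he
        · rw [Sym2.mem_iff] at hmem
          rcases hmem with rfl | rfl
          · exact hBg f hfB hh'f
          · exact hhh' rfl
        · have hbB : e ∈ B := Finset.erase_subset _ _ he
          have hbne : e ≠ f := (Finset.mem_erase.mp he).1
          by_cases hbN : e ∈ N
          · exact hbne (hN.eq_of_mem hbN hfN hmem hh'f)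
          · rcases hB3 e hbB hbN h' hmem with h1 | ⟨a, haA, haN, hha⟩
            · exact hh'z h1
            · exact he'N ((hA.eq_of_mem haA he'A hha hh'e') ▸ haN)
      have hB'3 : ∀ e ∈ B', e ∉ N → ∀ v ∈ e, v = z ∨ ∃ a ∈ A', a ∈ N ∧ v ∈ a := by
        intro e he heN v hv
        have hmemA' : ∀ a, a ∈ A → a ∈ N → a ∈ A' := by
          intro a haA haN
          have hane : a ≠ e' := fun hEq => he'N (hEq ▸ haN)
          exact Finset.mem_insert_of_mem (Finset.mem_erase.mpr ⟨hane, haA⟩)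
        rcases Finset.mem_insert.mp he with rfl | he
        · rw [Sym2.mem_iff] at hv
          rcases hv with rfl | rfl
          · rcases hgz with h1 | ⟨a, haA, haN, hga⟩
            · exact Or.inl h1
            · exact Or.inr ⟨a, hmemA' a haA haN, haN, hga⟩
          · exact Or.inr ⟨f, Finset.mem_insert_self _ _, hfN, hhf⟩
        · have hbB : e ∈ B := Finset.erase_subset _ _ he
          rcases hB3 e hbB heN v hv with h1 | ⟨a, haA, haN, hva⟩
          · exact Or.inl h1
          · exact Or.inr ⟨a, hmemA' a haA haN, haN, hva⟩
      have hgz' : h' = z ∨ ∃ a ∈ A', a ∈ N ∧ h' ∈ a :=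
        Or.inr ⟨f, Finset.mem_insert_self _ _, hfN, hh'f⟩
      -- the sixth invariant
      have hguf : gu ≠ f := fun hEq => hguN (hEq ▸ hfN)
      have hgwf : gw ≠ f := fun hEq => hgwN (hEq ▸ hfN)
      have hyu_ne_h' : yu ≠ h' := by
        intro hEq
        have hfe : f = s(u, yu) :=
          hN.eq_of_mem hfN hfu (by rw [hEq]; exact hh'f) (Sym2.mem_mk_right u yu)
        rw [hfeq] at hfe
        rcases Sym2.eq_iff.mp hfe with ⟨h1, _⟩ | ⟨_, h2⟩
        · exact hu _ hghM (by rw [h1] at *; exact Sym2.mem_mk_right g u)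
        · exact huyu (hEq.trans h2).symm
      have hyw_ne_h' : yw ≠ h' := by
        intro hEq
        have hfe : f = s(w, yw) :=
          hN.eq_of_mem hfN hfw (by rw [hEq]; exact hh'f) (Sym2.mem_mk_right w yw)
        rw [hfeq] at hfe
        rcases Sym2.eq_iff.mp hfe with ⟨h1, _⟩ | ⟨_, h2⟩
        · exact hw _ hghM (by rw [h1] at *; exact Sym2.mem_mk_right g w)
        · exact hwyw (hEq.trans h2).symm
      have hmemA'' : ∀ a, a ∈ A → a ≠ e' → a ∈ A' :=
        fun a haA hane => Finset.mem_insert_of_mem (Finset.mem_erase.mpr ⟨hane, haA⟩)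
      have h6' : (gu ∈ A' ∧ gw ∈ A') ∨ (gw ∈ A' ∧ h'' = yu) ∨ (gu ∈ A' ∧ h'' = yw) := by
        by_cases hgue : gu = e'
        · have hyu_h'' : h'' = yu := by
            have hmem : yu ∈ e' := hgue ▸ hyugu
            rw [he'eq, Sym2.mem_iff] at hmem
            rcases hmem with h1 | h1
            · exact absurd h1 hyu_ne_h'
            · exact h1.symm
          have hgwgu : gw ≠ e' := by
            intro hEq
            have hmem : yw ∈ e' := hEq ▸ hywgw
            rw [he'eq, Sym2.mem_iff] at hmem
            rcases hmem with h1 | h1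
            · exact hyw_ne_h' h1
            · exact hyuyw ((h1.trans hyu_h'').symm)
          exact Or.inr (Or.inl ⟨hmemA'' gw h6''.2 hgwgu, hyu_h''⟩)
        · by_cases hgwe : gw = e'
          · have hyw_h'' : h'' = yw := by
              have hmem : yw ∈ e' := hgwe ▸ hywgw
              rw [he'eq, Sym2.mem_iff] at hmem
              rcases hmem with h1 | h1
              · exact absurd h1 hyw_ne_h'
              · exact h1.symm
            exact Or.inr (Or.inr ⟨hmemA'' gu h6''.1 hgue, hyw_h''⟩)
          · exact Or.inl ⟨hmemA'' gu h6''.1 hgue, hmemA'' gw h6''.2 hgwe⟩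
      exact IH _ hmeas A' B' h' h'' rfl hA'm hA'MN hA'card hA'z hA'h hh''z hghM' hghN'
        hMNA' hB'm hB'MN hB'card hB'g hB'3 hgz' h6'
noncomputable def vertsF (E : Finset (Sym2 V)) : Finset V :=
  Finset.univ.filter (fun v => ∃ e ∈ E, v ∈ e)

lemma mem_vertsF {E : Finset (Sym2 V)} {v : V} : v ∈ vertsF E ↔ ∃ e ∈ E, v ∈ e := by
  simp [vertsF]

lemma covered_card_le (M : Finset (Sym2 V)) :
    (M.biUnion (fun e => Finset.univ.filter (· ∈ e))).card ≤ M.card * 2 := by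
  refine Finset.card_biUnion_le_card_mul _ _ _ ?_
  intro e _
  induction e with
  | _ a b =>
    have hss : Finset.univ.filter (· ∈ s(a, b)) ⊆ {a, b} := by
      intro v hv
      have := (Finset.mem_filter.mp hv).2
      rw [Sym2.mem_iff] at this
      simpa [Finset.mem_insert] using this
    exact (Finset.card_le_card hss).trans (Finset.card_insert_le _ _ |>.trans (by simp))

/-- Gallai's lemma: a connected graph in which every vertex is missed by some
maximum matching has at most `2ν+1` vertices. -/
lemma gallai (E : Finset (Sym2 V))
    (hconn : ∀ v ∈ vertsF E, ∀ u ∈ vertsF E,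
      (SimpleGraph.fromEdgeSet (↑E : Set (Sym2 V))).Reachable v u)
    (hin : ∀ v ∈ vertsF E, ∃ N, N ⊆ E ∧ IsMatchingSet N ∧ (∀ e ∈ N, v ∉ e) ∧
      ∀ M', M' ⊆ E → IsMatchingSet M' → M'.card ≤ N.card)
    (M0 : Finset (Sym2 V)) (hM0E : M0 ⊆ E) (hM0 : IsMatchingSet M0)
    (hM0max : ∀ M', M' ⊆ E → IsMatchingSet M' → M'.card ≤ M0.card) :
    (vertsF E).card ≤ 2 * M0.card + 1 := by
  by_contra hcon
  push_neg at hcon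
  set G' := SimpleGraph.fromEdgeSet (↑E : Set (Sym2 V)) with hG'
  -- any maximum matching misses two distinct vertices
  have missed : ∀ M : Finset (Sym2 V), IsMatchingSet M → M.card ≤ M0.card →
      ∃ a b, a ∈ vertsF E ∧ b ∈ vertsF E ∧ a ≠ b ∧
        (∀ e ∈ M, a ∉ e) ∧ (∀ e ∈ M, b ∉ e) := by
    intro M _ hcard
    set D := vertsF E \ (M.biUnion (fun e => Finset.univ.filter (· ∈ e))) with hD
    have hDcard : 1 < D.card := by
      have h1 := covered_card_le M
      have h2 : (vertsF E).card - (M.biUnion (fun e => Finset.univ.filter (· ∈ e))).card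
          ≤ D.card := Finset.le_card_sdiff _ _
      omega
    obtain ⟨a, ha, b, hb, hab⟩ := Finset.one_lt_card.mp hDcard
    have hmiss : ∀ c ∈ D, ∀ e ∈ M, c ∉ e := by
      intro c hc e he hce
      have := (Finset.mem_sdiff.mp hc).2
      exact this (Finset.mem_biUnion.mpr ⟨e, he, Finset.mem_filter.mpr ⟨Finset.mem_univ _, hce⟩⟩)
    exact ⟨a, b, (Finset.mem_sdiff.mp ha).1, (Finset.mem_sdiff.mp hb).1, hab,
      hmiss a ha, hmiss b hb⟩
  -- minimal-distance bad triple
  have hPex : ∃ n, ∃ M x y, M ⊆ E ∧ IsMatchingSet M ∧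
      (∀ M', M' ⊆ E → IsMatchingSet M' → M'.card ≤ M.card) ∧
      x ∈ vertsF E ∧ y ∈ vertsF E ∧ x ≠ y ∧ (∀ e ∈ M, x ∉ e) ∧ (∀ e ∈ M, y ∉ e) ∧
      G'.dist x y = n := by
    obtain ⟨a, b, haV, hbV, hab, hag, hbg⟩ := missed M0 hM0 le_rfl
    exact ⟨G'.dist a b, M0, a, b, hM0E, hM0, hM0max, haV, hbV, hab, hag, hbg, rfl⟩
  obtain ⟨M, x, y, hME, hM, hMmax, hxV, hyV, hxy, hxM, hyM, hdist⟩ := Nat.find_spec hPex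
  set d := Nat.find hPex with hdd
  have hr : G'.Reachable x y := hconn x hxV y hyV
  have hd0 : d ≠ 0 := fun h0 => hxy (hr.dist_eq_zero_iff.mp (hdist.trans h0))
  have hd1 : d ≠ 1 := by
    intro h1
    obtain ⟨p, hp⟩ := hr.exists_walk_length_eq_dist
    have hadj : G'.Adj x y := p.adj_of_length_eq_one (by rw [hp, hdist, h1])
    rw [hG', SimpleGraph.fromEdgeSet_adj] at hadj
    have hxyE : s(x, y) ∈ E := hadj.1
    have hM' : IsMatchingSet (insert s(x, y) M) := by
      refine hM.insert' (by simpa [Sym2.isDiag_iff_proj_eq] using hadj.2) ?_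
      intro f hf v hv hvf
      rw [Sym2.mem_iff] at hv
      rcases hv with rfl | rfl
      · exact hxM f hf hvf
      · exact hyM f hf hvf
    have hle := hMmax _ (Finset.insert_subset hxyE hME) hM'
    have hnm : s(x, y) ∉ M := fun hmem => hxM _ hmem (Sym2.mem_mk_left x y)
    rw [Finset.card_insert_of_notMem hnm] at hle
    omega
  have hd2 : 2 ≤ d := by omega
  obtain ⟨p, hp⟩ := hr.exists_walk_length_eq_dist
  rw [hdist] at hp
  cases p with
  | nil => exact hxy rfl
  | @cons _ z _ hadj q =>
    rw [SimpleGraph.Walk.length_cons] at hp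
    have hadj' := hadj
    rw [hG', SimpleGraph.fromEdgeSet_adj] at hadj'
    have hxzE : s(x, z) ∈ E := hadj'.1
    have hzV : z ∈ vertsF E := mem_vertsF.mpr ⟨s(x, z), hxzE, Sym2.mem_mk_right x z⟩
    have hzx : z ≠ x := hadj.ne'
    have hzy : z ≠ y := by
      intro hEq
      have : G'.dist x y ≤ 1 := by
        have := SimpleGraph.dist_le (hEq ▸ hadj).toWalk
        simpa [SimpleGraph.Adj.toWalk] using this
      omega
    have hdzy : G'.dist z y < d := by
      have := SimpleGraph.dist_le q
      omega
    have hdxz : G'.dist x z < d := by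
      have := SimpleGraph.dist_le hadj.toWalk
      simp only [SimpleGraph.Adj.toWalk, SimpleGraph.Walk.length_cons,
        SimpleGraph.Walk.length_nil] at this
      omega
    -- z is covered by M
    have hzcov : ∃ e ∈ M, z ∈ e := by
      by_contra hzc
      push_neg at hzc
      exact Nat.find_min hPex hdzy ⟨M, z, y, hME, hM, hMmax, hzV, hyV, hzy, hzc, hyM, rfl⟩
    -- maximum matching missing z, maximizing overlap with M
    obtain ⟨N0, hN0E, hN0, hN0z, hN0max⟩ := hin z hzV
    have hN0M0 : N0.card = M0.card :=
      le_antisymm (hM0max _ hN0E hN0) (hN0max _ hM0E hM0)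
    have hTne : (E.powerset.filter (fun N => IsMatchingSet N ∧ (∀ e ∈ N, z ∉ e) ∧
        N.card = N0.card)).Nonempty :=
      ⟨N0, by
        simp only [Finset.mem_filter, Finset.mem_powerset]
        exact ⟨hN0E, hN0, hN0z, by simp⟩⟩
    obtain ⟨N, hNT, hNarg⟩ := Finset.exists_max_image _ (fun N => (M ∩ N).card) hTne
    simp only [Finset.mem_filter, Finset.mem_powerset] at hNT
    obtain ⟨hNE, hN, hzN, hNcard⟩ := hNT
    have hNmax : ∀ M', M' ⊆ E → IsMatchingSet M' → M'.card ≤ N.card := by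
      intro M' h1 h2
      rw [hNcard]
      exact hN0max M' h1 h2
    -- N covers x and y
    have hxNcov : ∃ e ∈ N, x ∈ e := by
      by_contra hxc
      push_neg at hxc
      have hzN' : ∀ e ∈ N, z ∉ e := hzN
      exact Nat.find_min hPex hdxz
        ⟨N, x, z, hNE, hN, hNmax, hxV, hzV, fun h => hzx h.symm, hxc, hzN', rfl⟩
    have hyNcov : ∃ e ∈ N, y ∈ e := by
      by_contra hyc
      push_neg at hyc
      exact Nat.find_min hPex hdzy
        ⟨N, z, y, hNE, hN, hNmax, hzV, hyV, hzy, hzN, hyc, rfl⟩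
    -- set up the data for rec_lemma
    obtain ⟨fu, hfuN, hxfu⟩ := hxNcov
    obtain ⟨yu, hfueq⟩ := mem_other_exists hxfu
    subst hfueq
    obtain ⟨fw, hfwN, hyfw⟩ := hyNcov
    obtain ⟨yw, hfweq⟩ := mem_other_exists hyfw
    subst hfweq
    have hyuyw : yu ≠ yw := by
      intro hEq
      subst hEq
      have := hN.eq_of_mem hfuN hfwN (Sym2.mem_mk_right x yu) (Sym2.mem_mk_right y yu)
      rcases Sym2.eq_iff.mp this with ⟨h1, _⟩ | ⟨h1, h2⟩
      · exact hxy h1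
      · exact hxy (h1.trans h2)
    have hyucov : ∃ e ∈ M, yu ∈ e := by
      by_contra hyuc
      push_neg at hyuc
      have hM' : IsMatchingSet (insert s(x, yu) M) := by
        refine hM.insert' (hN.1 _ hfuN) ?_
        intro f hf v hv hvf
        rw [Sym2.mem_iff] at hv
        rcases hv with rfl | rfl
        · exact hxM f hf hvf
        · exact hyuc f hf hvf
      have hle := hMmax _ (Finset.insert_subset (hNE hfuN) hME) hM'
      have hnm : s(x, yu) ∉ M := fun hmem => hxM _ hmem (Sym2.mem_mk_left x yu)
      rw [Finset.card_insert_of_notMem hnm] at hle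
      omega
    have hywcov : ∃ e ∈ M, yw ∈ e := by
      by_contra hywc
      push_neg at hywc
      have hM' : IsMatchingSet (insert s(y, yw) M) := by
        refine hM.insert' (hN.1 _ hfwN) ?_
        intro f hf v hv hvf
        rw [Sym2.mem_iff] at hv
        rcases hv with rfl | rfl
        · exact hyM f hf hvf
        · exact hywc f hf hvf
      have hle := hMmax _ (Finset.insert_subset (hNE hfwN) hME) hM'
      have hnm : s(y, yw) ∉ M := fun hmem => hyM _ hmem (Sym2.mem_mk_left y yw)
      rw [Finset.card_insert_of_notMem hnm] at hle
      omega
    obtain ⟨gu, hguM, hyugu⟩ := hyucov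
    obtain ⟨gw, hgwM, hywgw⟩ := hywcov
    have hguN : gu ∉ N := by
      intro hguN'
      have := hN.eq_of_mem hguN' hfuN hyugu (Sym2.mem_mk_right x yu)
      exact hxM gu hguM (this ▸ Sym2.mem_mk_left x yu)
    have hgwN : gw ∉ N := by
      intro hgwN'
      have := hN.eq_of_mem hgwN' hfwN hywgw (Sym2.mem_mk_right y yw)
      exact hyM gw hgwM (this ▸ Sym2.mem_mk_left y yw)
    -- initial state
    obtain ⟨e1, he1M, hze1⟩ := hzcov
    obtain ⟨p1, he1eq⟩ := mem_other_exists hze1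
    have he1N : e1 ∉ N := fun hmem => hzN e1 hmem hze1
    have hzp1 : z ≠ p1 := by
      have := hM.1 e1 he1M
      rw [he1eq] at this
      exact ne_of_not_isDiag this
    have hAz0 : ∀ e ∈ M.erase e1, z ∉ e := by
      intro e he hze
      exact (Finset.mem_erase.mp he).1 (hM.eq_of_mem (Finset.mem_erase.mp he).2 he1M hze hze1)
    have hp1e1 : p1 ∈ e1 := by rw [he1eq]; exact Sym2.mem_mk_right z p1
    have hAh0 : ∀ e ∈ M.erase e1, p1 ∉ e := by
      intro e he hpe
      exact (Finset.mem_erase.mp he).1 (hM.eq_of_mem (Finset.mem_erase.mp he).2 he1M hpe hp1e1)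
    have h60 : (gu ∈ M.erase e1 ∧ gw ∈ M.erase e1) ∨ (gw ∈ M.erase e1 ∧ p1 = yu) ∨
        (gu ∈ M.erase e1 ∧ p1 = yw) := by
      have hyuz : yu ≠ z := fun hEq => hzN _ hfuN (hEq ▸ Sym2.mem_mk_right x yu)
      have hywz : yw ≠ z := fun hEq => hzN _ hfwN (hEq ▸ Sym2.mem_mk_right y yw)
      by_cases hgu1 : gu = e1
      · have hyup1 : yu = p1 := by
          have : yu ∈ e1 := hgu1 ▸ hyugu
          rw [he1eq, Sym2.mem_iff] at this
          rcases this with h1 | h1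
          · exact absurd h1 hyuz
          · exact h1
        have hgw1 : gw ≠ e1 := by
          intro hEq
          have : yw ∈ e1 := hEq ▸ hywgw
          rw [he1eq, Sym2.mem_iff] at this
          rcases this with h1 | h1
          · exact hywz h1
          · exact hyuyw (hyup1.trans h1.symm)
        exact Or.inr (Or.inl ⟨Finset.mem_erase.mpr ⟨hgw1, hgwM⟩, hyup1.symm⟩)
      · by_cases hgw1 : gw = e1
        · have hywp1 : yw = p1 := by
            have : yw ∈ e1 := hgw1 ▸ hywgw
            rw [he1eq, Sym2.mem_iff] at this
            rcases this with h1 | h1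
            · exact absurd h1 hywz
            · exact h1
          exact Or.inr (Or.inr ⟨Finset.mem_erase.mpr ⟨hgu1, hguM⟩, hywp1.symm⟩)
        · exact Or.inl ⟨Finset.mem_erase.mpr ⟨hgu1, hguM⟩, Finset.mem_erase.mpr ⟨hgw1, hgwM⟩⟩
    have hMpos : 0 < M.card := Finset.card_pos.mpr ⟨e1, he1M⟩
    obtain ⟨M', hM'E, hM'm, hM'card, hM'z, hM'lt⟩ :=
      rec_lemma E M N hM hN hME hNE hNmax z x y yu yw gu gw hzN hxM hyM hfuN hfwN hyuyw
        hguM hyugu hguN hgwM hywgw hgwN ((M.erase e1) \ N).card (M.erase e1) N z p1 rfl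
        (hM.erase e1) (fun a ha => Finset.mem_union_left _ (Finset.erase_subset _ _ ha))
        (by rw [Finset.card_erase_of_mem he1M]; omega)
        hAz0 hAh0 (fun h => hzp1 h.symm)
        (he1eq ▸ he1M) (he1eq ▸ he1N)
        (fun a ha => Finset.mem_erase.mpr
          ⟨fun hEq => he1N (hEq ▸ (Finset.mem_inter.mp ha).2), (Finset.mem_inter.mp ha).1⟩)
        hN (fun b hb => Finset.mem_union_right _ hb) rfl
        hzN (fun e _ heN => absurd ‹e ∈ N› heN) (Or.inl rfl) h60
    have hM'T : M' ∈ E.powerset.filter (fun N => IsMatchingSet N ∧ (∀ e ∈ N, z ∉ e) ∧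
        N.card = N0.card) := by
      simp only [Finset.mem_filter, Finset.mem_powerset]
      refine ⟨hM'E, hM'm, hM'z, ?_⟩
      rw [hM'card]
      exact le_antisymm (hN0max _ hME hM) (hMmax _ hN0E hN0)
    have := hNarg M' hM'T
    omega
lemma sym2_exists_mem (e : Sym2 V) : ∃ v, v ∈ e := by
  induction e with
  | _ a b => exact ⟨a, Sym2.mem_mk_left a b⟩

lemma vnorm_split (x : Sym2 V → ℝ) (v : V) :
    vnorm x = fracDeg x v + vnorm (fun e => if v ∈ e then 0 else x e) := by
  rw [fracDeg, vnorm, vnorm, ← Finset.sum_add_distrib]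
  refine Finset.sum_congr rfl fun e _ => ?_
  by_cases h : v ∈ e <;> simp [h]

lemma fracDeg_mono {x y : Sym2 V → ℝ} (h : ∀ e, x e ≤ y e) (v : V) :
    fracDeg x v ≤ fracDeg y v := by
  refine Finset.sum_le_sum fun e _ => ?_
  by_cases hh : v ∈ e <;> simp [hh, h e]

lemma handshake {x : Sym2 V → ℝ} (hnd : ∀ e, x e ≠ 0 → ¬ e.IsDiag) :
    ∑ v : V, fracDeg x v = 2 * vnorm x := by
  unfold fracDeg vnorm
  rw [Finset.sum_comm, Finset.mul_sum]
  refine Finset.sum_congr rfl fun e _ => ?_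
  rw [Finset.sum_ite, Finset.sum_const, Finset.sum_const_zero, add_zero]
  by_cases hxe : x e = 0
  · simp [hxe]
  · have hnd' := hnd e hxe
    obtain ⟨a, b⟩ := e
    have hab : a ≠ b := by simpa [Sym2.isDiag_iff_proj_eq] using hnd'
    have hfil : Finset.univ.filter (fun v => v ∈ s(a, b)) = {a, b} := by
      ext v
      simp [Sym2.mem_iff]
    rw [hfil, Finset.card_insert_of_notMem (by simp [hab]), Finset.card_singleton,
      nsmul_eq_mul]
    norm_num

lemma edge_count (E : Finset (Sym2 V)) (hnd : ∀ e ∈ E, ¬ e.IsDiag) :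
    2 * E.card + 2 * (vertsF E).card ≤ (vertsF E).card * ((vertsF E).card + 1) := by
  set W := vertsF E with hW
  set D := W.image (fun v => s(v, v)) with hD
  have hEs : E ⊆ W.sym2 := fun e he =>
    Finset.mem_sym2_iff.mpr (fun a ha => mem_vertsF.mpr ⟨e, he, ha⟩)
  have hDs : D ⊆ W.sym2 := by
    intro d hd
    obtain ⟨v, hv, rfl⟩ := Finset.mem_image.mp hd
    exact Finset.mem_sym2_iff.mpr (fun a ha => by
      rw [Sym2.mem_iff] at ha; rcases ha with rfl | rfl <;> exact hv)
  have hdisj : Disjoint E D := by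
    rw [Finset.disjoint_left]
    intro e heE heD
    obtain ⟨v, _, rfl⟩ := Finset.mem_image.mp heD
    exact hnd _ heE (by simp [Sym2.isDiag_iff_proj_eq])
  have hDcard : D.card = W.card := by
    rw [hD, Finset.card_image_of_injective]
    intro a b hab
    rcases Sym2.eq_iff.mp hab with ⟨h1, _⟩ | ⟨h1, _⟩ <;> exact h1
  have hunion : E.card + W.card ≤ W.sym2.card := by
    rw [← hDcard, ← Finset.card_union_of_disjoint hdisj]
    exact Finset.card_le_card (Finset.union_subset hEs hDs)
  have hsym2 : W.sym2.card = (W.card + 1).choose 2 := Finset.card_sym2 W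
  obtain ⟨k, hk⟩ := Nat.even_mul_succ_self W.card
  have hch : 2 * ((W.card + 1).choose 2) = W.card * (W.card + 1) := by
    rw [Nat.choose_two_right]
    have hk' : (W.card + 1) * (W.card + 1 - 1) = k + k := by
      simpa [Nat.mul_comm] using hk
    rw [hk', hk]
    omega
  omega
lemma empty_matching_works {x : Sym2 V → ℝ} (hx0 : ∀ e, x e = 0) (c : ℝ) (hc : 0 ≤ c) :
    ∃ M : Finset (Sym2 V), IsMatchingSet M ∧ (∀ e ∈ M, x e ≠ 0) ∧ vnorm x ≤ c * M.card := by
  refine ⟨∅, ⟨fun e he => absurd he (Finset.notMem_empty e),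
    fun e he => absurd he (Finset.notMem_empty e)⟩,
    fun e he => absurd he (Finset.notMem_empty e), ?_⟩
  simp [vnorm, hx0]

/-- The core inequality: an `ε`-capped fractional matching has value at most
`(1+ε)` times the size of some matching inside its support. -/
lemma core (ε : ℝ) (hε0 : 0 ≤ ε) :
    ∀ (n : ℕ) (s : Finset V) (x : Sym2 V → ℝ), s.card ≤ n →
      (∀ e, 0 ≤ x e) → (∀ e, x e ≤ ε) → (∀ e, x e ≠ 0 → ¬ e.IsDiag) →
      (∀ e, x e ≠ 0 → ∀ v ∈ e, v ∈ s) → (∀ v, fracDeg x v ≤ 1) →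
      ∃ M : Finset (Sym2 V), IsMatchingSet M ∧ (∀ e ∈ M, x e ≠ 0) ∧
        vnorm x ≤ (1 + ε) * M.card := by
  intro n
  induction n with
  | zero =>
    intro s x hs hnn hcap hnd hsupp hfm
    refine empty_matching_works (fun e => ?_) _ (by linarith)
    by_contra hxe
    obtain ⟨v, hv⟩ := sym2_exists_mem e
    have hvs := hsupp e hxe v hv
    rw [Finset.card_eq_zero.mp (Nat.le_zero.mp hs)] at hvs
    exact absurd hvs (Finset.notMem_empty v)
  | succ n IH =>
    intro s x hs hnn hcap hnd hsupp hfm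
    set E := Finset.univ.filter (fun e => x e ≠ 0) with hE
    have hmemE : ∀ e, e ∈ E ↔ x e ≠ 0 := fun e => by simp [hE]
    have hndE : ∀ e ∈ E, ¬ e.IsDiag := fun e he => hnd e ((hmemE e).mp he)
    by_cases hEe : E = ∅
    · refine empty_matching_works (fun e => ?_) _ (by linarith)
      by_contra hxe
      exact absurd ((hmemE e).mpr hxe) (by rw [hEe]; exact Finset.notMem_empty e)
    · obtain ⟨Mstar, hMsE, hMs, hMsmax⟩ := exists_max_matching E
      have hMssupp : ∀ e ∈ Mstar, x e ≠ 0 := fun e he => (hmemE e).mp (hMsE he)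
      by_cases hess : ∃ v, (∃ e ∈ E, v ∈ e) ∧ ∀ M', M' ⊆ E → IsMatchingSet M' →
          (∀ e ∈ M', v ∉ e) → M'.card < Mstar.card
      · -- Case 1 : an essential vertex exists; delete it and recurse.
        obtain ⟨v, ⟨e0, he0E, hve0⟩, hvss⟩ := hess
        have hvs : v ∈ s := hsupp e0 ((hmemE e0).mp he0E) v hve0
        set x' := fun e => if v ∈ e then 0 else x e with hx'
        have hx'le : ∀ e, x' e ≤ x e := fun e => by
          by_cases h : v ∈ e <;> simp [hx', h, hnn e]
        have hx'ne : ∀ e, x' e ≠ 0 → x e ≠ 0 ∧ v ∉ e := by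
          intro e he
          by_cases h : v ∈ e
          · simp [hx', h] at he
          · exact ⟨by simpa [hx', h] using he, h⟩
        obtain ⟨M₁, hM₁m, hM₁s, hM₁v⟩ := IH (s.erase v) x'
          (by rw [Finset.card_erase_of_mem hvs]; omega)
          (fun e => by by_cases h : v ∈ e <;> simp [hx', h, hnn e])
          (fun e => by by_cases h : v ∈ e <;> simp [hx', h, hcap e, hε0])
          (fun e he => hnd e (hx'ne e he).1)
          (fun e he u hu => Finset.mem_erase.mpr
            ⟨fun hEq => (hx'ne e he).2 (hEq ▸ hu), hsupp e (hx'ne e he).1 u hu⟩)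
          (fun u => le_trans (fracDeg_mono hx'le u) (hfm u))
        have hM₁E : M₁ ⊆ E := fun e he => (hmemE e).mpr (hx'ne e (hM₁s e he)).1
        have hM₁miss : ∀ e ∈ M₁, v ∉ e := fun e he => (hx'ne e (hM₁s e he)).2
        have hlt := hvss M₁ hM₁E hM₁m hM₁miss
        refine ⟨Mstar, hMs, hMssupp, ?_⟩
        have hcast : (M₁.card : ℝ) + 1 ≤ (Mstar.card : ℝ) := by exact_mod_cast hlt
        have hkey : (1 + ε) * ((M₁.card : ℝ) + 1) ≤ (1 + ε) * Mstar.card :=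
          mul_le_mul_of_nonneg_left hcast (by linarith)
        have hsplit := vnorm_split x v
        have hfd := hfm v
        rw [← hx'] at hsplit
        nlinarith [hM₁v]
      · push_neg at hess
        obtain ⟨e0, he0E⟩ := Finset.nonempty_of_ne_empty hEe
        obtain ⟨v0, hv0e0⟩ := sym2_exists_mem e0
        set G2 := SimpleGraph.fromEdgeSet (↑E : Set (Sym2 V)) with hG2
        by_cases hconn : ∀ u, (∃ e ∈ E, u ∈ e) → G2.Reachable v0 u
        · -- Case 3 : connected, no essential vertex: use Gallai's lemma.
          have hin : ∀ v ∈ vertsF E, ∃ N, N ⊆ E ∧ IsMatchingSet N ∧ (∀ e ∈ N, v ∉ e) ∧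
              ∀ M', M' ⊆ E → IsMatchingSet M' → M'.card ≤ N.card := by
            intro v hv
            obtain ⟨M', hM'E, hM'm, hM'miss, hM'ge⟩ := hess v (mem_vertsF.mp hv)
            exact ⟨M', hM'E, hM'm, hM'miss,
              fun M'' h1 h2 => le_trans (hMsmax M'' h1 h2) hM'ge⟩
          have hconn' : ∀ v ∈ vertsF E, ∀ u ∈ vertsF E, G2.Reachable v u := by
            intro v hv u hu
            exact (hconn v (mem_vertsF.mp hv)).symm.trans (hconn u (mem_vertsF.mp hu))
          have hW := gallai E hconn' hin Mstar hMsE hMs hMsmax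
          -- mass bounds
          have hm1 : 2 * vnorm x ≤ ((vertsF E).card : ℝ) := by
            have hhs := handshake hnd
            have hzero : ∀ v ∈ Finset.univ, v ∉ vertsF E → fracDeg x v = 0 := by
              intro v _ hv
              rw [fracDeg]
              refine Finset.sum_eq_zero fun e _ => ?_
              by_cases h : v ∈ e
              · rw [if_pos h]
                by_contra hxe
                exact hv (mem_vertsF.mpr ⟨e, (hmemE e).mpr hxe, h⟩)
              · rw [if_neg h]
            have heq : ∑ v ∈ vertsF E, fracDeg x v = ∑ v : V, fracDeg x v :=
              Finset.sum_subset (Finset.subset_univ _) hzero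
            have hle : ∑ v ∈ vertsF E, fracDeg x v ≤ (vertsF E).card • (1 : ℝ) :=
              Finset.sum_le_card_nsmul _ _ 1 (fun v _ => hfm v)
            rw [nsmul_eq_mul, mul_one] at hle
            linarith [heq ▸ hle, hhs]
          have hm2 : vnorm x ≤ ε * E.card := by
            have heq : ∑ e ∈ E, x e = vnorm x := by
              refine Finset.sum_subset (Finset.subset_univ _) ?_
              intro e _ he
              by_contra hxe
              exact he ((hmemE e).mpr hxe)
            have hle : ∑ e ∈ E, x e ≤ E.card • ε :=
              Finset.sum_le_card_nsmul _ _ ε (fun e _ => hcap e)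
            rw [nsmul_eq_mul] at hle
            rw [← heq]
            linarith [hle]
          have hm3 := edge_count E hndE
          have hW1 : 1 ≤ (vertsF E).card := by
            refine Finset.card_pos.mpr ⟨v0, mem_vertsF.mpr ⟨e0, he0E, hv0e0⟩⟩
          refine ⟨Mstar, hMs, hMssupp, ?_⟩
          set a := vnorm x
          have hWr : ((vertsF E).card : ℝ) ≤ 2 * (Mstar.card : ℝ) + 1 := by
            exact_mod_cast hW
          have hm3r : 2 * (E.card : ℝ) + 2 * ((vertsF E).card : ℝ) ≤
              ((vertsF E).card : ℝ) * (((vertsF E).card : ℝ) + 1) := by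
            exact_mod_cast hm3
          have hW1r : (1 : ℝ) ≤ ((vertsF E).card : ℝ) := by exact_mod_cast hW1
          set Wr := ((vertsF E).card : ℝ)
          set Er := ((E.card : ℕ) : ℝ)
          set nur := ((Mstar.card : ℕ) : ℝ)
          have hnur : 0 ≤ nur := Nat.cast_nonneg _
          by_cases hc : 1 ≤ ε * (Wr - 1)
          · have h2 : Wr ≤ (1 + ε) * (Wr - 1) := by nlinarith
            have h3 : (1 + ε) * (Wr - 1) ≤ (1 + ε) * (2 * nur) := by nlinarith
            linarith [hm1, h2, h3]
          · push_neg at hc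
            have h4 : 2 * a ≤ ε * (Wr * Wr - Wr) := by nlinarith
            have h5 : ε * (Wr * Wr - Wr) ≤ (1 + ε) * (Wr - 1) := by nlinarith
            have h3 : (1 + ε) * (Wr - 1) ≤ (1 + ε) * (2 * nur) := by nlinarith
            linarith
        · -- Case 2 : disconnected support; split into two pieces and recurse.
          push_neg at hconn
          obtain ⟨u0, hu0V, hu0r⟩ := hconn
          set R := Finset.univ.filter (fun u => G2.Reachable v0 u) with hR
          have hmemR : ∀ u, u ∈ R ↔ G2.Reachable v0 u := fun u => by simp [hR]
          have hstep : ∀ a b : V, s(a, b) ∈ E → a ∈ R → b ∈ R := by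
            intro a b hab haR
            rw [hmemR] at haR ⊢
            refine haR.trans ?_
            have hadj : G2.Adj a b := by
              rw [hG2, SimpleGraph.fromEdgeSet_adj]
              exact ⟨Finset.mem_coe.mpr hab, ne_of_not_isDiag (hndE _ hab)⟩
            exact hadj.reachable
          have hdich : ∀ e ∈ E, (∀ u ∈ e, u ∈ R) ∨ (∀ u ∈ e, u ∉ R) := by
            intro e heE
            obtain ⟨a, b⟩ := e
            by_cases ha : a ∈ R
            · left
              intro u hu
              rw [Sym2.mem_iff] at hu
              rcases hu with rfl | rfl
              · exact ha
              · exact hstep a u heE ha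
            · right
              intro u hu huR
              rw [Sym2.mem_iff] at hu
              rcases hu with rfl | rfl
              · exact ha huR
              · exact ha (hstep u a (Sym2.eq_swap ▸ heE) huR)
          set x1 := fun e => if ∀ u ∈ e, u ∈ R then x e else 0 with hx1
          set x2 := fun e => if ∀ u ∈ e, u ∈ R then 0 else x e with hx2
          have hx1pos : ∀ e, (∀ u ∈ e, u ∈ R) → x1 e = x e := fun e h => by
            simp only [hx1]; rw [if_pos h]
          have hx1neg : ∀ e, ¬ (∀ u ∈ e, u ∈ R) → x1 e = 0 := fun e h => by
            simp only [hx1]; rw [if_neg h]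
          have hx2pos : ∀ e, (∀ u ∈ e, u ∈ R) → x2 e = 0 := fun e h => by
            simp only [hx2]; rw [if_pos h]
          have hx2neg : ∀ e, ¬ (∀ u ∈ e, u ∈ R) → x2 e = x e := fun e h => by
            simp only [hx2]; rw [if_neg h]
          have hx1ne : ∀ e, x1 e ≠ 0 → x e ≠ 0 ∧ ∀ u ∈ e, u ∈ R := by
            intro e he
            by_cases h : ∀ u ∈ e, u ∈ R
            · rw [hx1pos e h] at he; exact ⟨he, h⟩
            · rw [hx1neg e h] at he; exact absurd rfl he
          have hx2ne : ∀ e, x2 e ≠ 0 → x e ≠ 0 ∧ ∀ u ∈ e, u ∉ R := by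
            intro e he
            by_cases h : ∀ u ∈ e, u ∈ R
            · rw [hx2pos e h] at he; exact absurd rfl he
            · rw [hx2neg e h] at he
              exact ⟨he, ((hdich e ((hmemE e).mpr he)).resolve_left h)⟩
          have hx1nn : ∀ e, 0 ≤ x1 e := by
            intro e
            by_cases h : ∀ u ∈ e, u ∈ R
            · rw [hx1pos e h]; exact hnn e
            · rw [hx1neg e h]
          have hx2nn : ∀ e, 0 ≤ x2 e := by
            intro e
            by_cases h : ∀ u ∈ e, u ∈ R
            · rw [hx2pos e h]
            · rw [hx2neg e h]; exact hnn e
          have hx1cap : ∀ e, x1 e ≤ ε := by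
            intro e
            by_cases h : ∀ u ∈ e, u ∈ R
            · rw [hx1pos e h]; exact hcap e
            · rw [hx1neg e h]; exact hε0
          have hx2cap : ∀ e, x2 e ≤ ε := by
            intro e
            by_cases h : ∀ u ∈ e, u ∈ R
            · rw [hx2pos e h]; exact hε0
            · rw [hx2neg e h]; exact hcap e
          have hx1le : ∀ e, x1 e ≤ x e := by
            intro e
            by_cases h : ∀ u ∈ e, u ∈ R
            · rw [hx1pos e h]
            · rw [hx1neg e h]; exact hnn e
          have hx2le : ∀ e, x2 e ≤ x e := by
            intro e
            by_cases h : ∀ u ∈ e, u ∈ R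
            · rw [hx2pos e h]; exact hnn e
            · rw [hx2neg e h]
          have hu0s : u0 ∈ s := by
            obtain ⟨eu, heuE, hu0eu⟩ := hu0V
            exact hsupp eu ((hmemE eu).mp heuE) u0 hu0eu
          have hu0R : u0 ∉ R := fun h => hu0r ((hmemR u0).mp h)
          have hv0s : v0 ∈ s := hsupp e0 ((hmemE e0).mp he0E) v0 hv0e0
          have hv0R : v0 ∈ R := (hmemR v0).mpr (SimpleGraph.Reachable.refl v0)
          have hcard1 : (s.filter (· ∈ R)).card ≤ n := by
            have hss : s.filter (· ∈ R) ⊆ s.erase u0 := by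
              intro u hu
              have := Finset.mem_filter.mp hu
              exact Finset.mem_erase.mpr ⟨fun hEq => hu0R (hEq ▸ this.2), this.1⟩
            have := Finset.card_le_card hss
            rw [Finset.card_erase_of_mem hu0s] at this
            omega
          have hcard2 : (s.filter (· ∉ R)).card ≤ n := by
            have hss : s.filter (· ∉ R) ⊆ s.erase v0 := by
              intro u hu
              have := Finset.mem_filter.mp hu
              exact Finset.mem_erase.mpr ⟨fun hEq => this.2 (hEq ▸ hv0R), this.1⟩
            have := Finset.card_le_card hss
            rw [Finset.card_erase_of_mem hv0s] at this
            omega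
          obtain ⟨M1, hM1m, hM1s, hM1v⟩ := IH (s.filter (· ∈ R)) x1 hcard1
            hx1nn hx1cap
            (fun e he => hnd e (hx1ne e he).1)
            (fun e he u hu => Finset.mem_filter.mpr
              ⟨hsupp e (hx1ne e he).1 u hu, (hx1ne e he).2 u hu⟩)
            (fun u => le_trans (fracDeg_mono hx1le u) (hfm u))
          obtain ⟨M2, hM2m, hM2s, hM2v⟩ := IH (s.filter (· ∉ R)) x2 hcard2
            hx2nn hx2cap
            (fun e he => hnd e (hx2ne e he).1)
            (fun e he u hu => Finset.mem_filter.mpr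
              ⟨hsupp e (hx2ne e he).1 u hu, (hx2ne e he).2 u hu⟩)
            (fun u => le_trans (fracDeg_mono hx2le u) (hfm u))
          have hM1R : ∀ e ∈ M1, ∀ u ∈ e, u ∈ R := fun e he => (hx1ne e (hM1s e he)).2
          have hM2R : ∀ e ∈ M2, ∀ u ∈ e, u ∉ R := fun e he => (hx2ne e (hM2s e he)).2
          have hdisjM : Disjoint M1 M2 := by
            rw [Finset.disjoint_left]
            intro e he1 he2
            obtain ⟨u, hu⟩ := sym2_exists_mem e
            exact hM2R e he2 u hu (hM1R e he1 u hu)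
          have hMm : IsMatchingSet (M1 ∪ M2) := by
            constructor
            · intro e he
              rcases Finset.mem_union.mp he with he | he
              · exact hM1m.1 e he
              · exact hM2m.1 e he
            · intro a ha b hb hne v hva hvb
              rcases Finset.mem_union.mp ha with ha | ha <;>
                rcases Finset.mem_union.mp hb with hb | hb
              · exact hM1m.2 a ha b hb hne v hva hvb
              · exact hM2R b hb v hvb (hM1R a ha v hva)
              · exact hM2R a ha v hva (hM1R b hb v hvb)
              · exact hM2m.2 a ha b hb hne v hva hvb
          have hsplitv : vnorm x = vnorm x1 + vnorm x2 := by
            rw [vnorm, vnorm, vnorm, ← Finset.sum_add_distrib]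
            refine Finset.sum_congr rfl fun e _ => ?_
            by_cases h : ∀ u ∈ e, u ∈ R
            · rw [hx1pos e h, hx2pos e h, add_zero]
            · rw [hx1neg e h, hx2neg e h, zero_add]
          refine ⟨M1 ∪ M2, hMm, ?_, ?_⟩
          · intro e he
            rcases Finset.mem_union.mp he with he | he
            · exact (hx1ne e (hM1s e he)).1
            · exact (hx2ne e (hM2s e he)).1
          · rw [Finset.card_union_of_disjoint hdisjM]
            push_cast
            nlinarith [hM1v, hM2v]
/-- Let `ε ∈ [0,1]`, `α > 0`, and let `x` be a fractional matching in `G = (V,E)` that is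
`ε`-restricted (`x_e ∈ [0,ε] ∪ {1}` for every edge) and satisfies `‖x‖ ≥ α·μ(G)`.  Then
`supp(x)` contains a matching `M` with `|M| ≥ α·(1−ε)·μ(G)`. -/
theorem stmt_17 (G : SimpleGraph V) (ε α : ℝ) (hε0 : 0 ≤ ε) (hε1 : ε ≤ 1) (hα : 0 < α)
    (x : Sym2 V → ℝ)
    (hxnn : ∀ e, 0 ≤ x e) (hsupp : ∀ e, x e ≠ 0 → e ∈ G.edgeSet)
    (hfm : ∀ v, fracDeg x v ≤ 1)
    (hres : ∀ e, x e ≤ ε ∨ x e = 1)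
    (hval : α * (matchNum G : ℝ) ≤ vnorm x) :
    ∃ M : Finset (Sym2 V), IsMatchingSet M ∧ (∀ e ∈ M, x e ≠ 0) ∧
      α * (1 - ε) * (matchNum G : ℝ) ≤ (M.card : ℝ) := by
  classical
  set F := Finset.univ.filter (fun e => x e = 1) with hF
  have hmemF : ∀ e, e ∈ F ↔ x e = 1 := fun e => by simp [hF]
  set y := fun e => if x e = 1 then 0 else x e with hy
  have hypos : ∀ e, x e = 1 → y e = 0 := fun e h => by simp only [hy]; rw [if_pos h]
  have hyneg : ∀ e, x e ≠ 1 → y e = x e := fun e h => by simp only [hy]; rw [if_neg h]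
  have hyne : ∀ e, y e ≠ 0 → x e ≠ 0 ∧ x e ≠ 1 := by
    intro e he
    by_cases h : x e = 1
    · rw [hypos e h] at he; exact absurd rfl he
    · rw [hyneg e h] at he; exact ⟨he, h⟩
  have hynn : ∀ e, 0 ≤ y e := fun e => by
    by_cases h : x e = 1
    · rw [hypos e h]
    · rw [hyneg e h]; exact hxnn e
  have hycap : ∀ e, y e ≤ ε := fun e => by
    by_cases h : x e = 1
    · rw [hypos e h]; exact hε0
    · rw [hyneg e h]; exact (hres e).resolve_right h
  have hynd : ∀ e, y e ≠ 0 → ¬ e.IsDiag := fun e he =>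
    G.not_isDiag_of_mem_edgeSet (hsupp e (hyne e he).1)
  have hyle : ∀ e, y e ≤ x e := fun e => by
    by_cases h : x e = 1
    · rw [hypos e h]; exact hxnn e
    · rw [hyneg e h]
  obtain ⟨M', hM'm, hM's, hM'v⟩ := core ε hε0 (Finset.univ : Finset V).card Finset.univ y
    le_rfl hynn hycap hynd (fun e _ v _ => Finset.mem_univ v)
    (fun v => le_trans (fracDeg_mono hyle v) (hfm v))
  have hdegtwo : ∀ (e f : Sym2 V) (v : V), e ≠ f → v ∈ e → v ∈ f →
      x e + x f ≤ fracDeg x v := by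
    intro e f v hne hve hvf
    rw [fracDeg]
    have hsum := Finset.sum_le_sum_of_subset_of_nonneg
      (f := fun i => if v ∈ i then x i else 0)
      (Finset.subset_univ ({e, f} : Finset (Sym2 V))) (fun i _ _ => by
        by_cases h : v ∈ i
        · simp only [if_pos h]; exact hxnn i
        · simp only [if_neg h]; exact le_rfl)
    calc x e + x f = ∑ i ∈ ({e, f} : Finset (Sym2 V)), if v ∈ i then x i else 0 := by
          rw [Finset.sum_pair hne, if_pos hve, if_pos hvf]
      _ ≤ _ := hsum
  have hFm : IsMatchingSet F := by
    constructor
    · intro e he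
      refine G.not_isDiag_of_mem_edgeSet (hsupp e ?_)
      rw [(hmemF e).mp he]; exact one_ne_zero
    · intro e he f hf hne v hve hvf
      have h2 := hdegtwo e f v hne hve hvf
      rw [(hmemF e).mp he, (hmemF f).mp hf] at h2
      linarith [hfm v]
  have hcross : ∀ e ∈ F, ∀ f ∈ M', ∀ v, v ∈ e → v ∉ f := by
    intro e he f hf v hve hvf
    have hyf := hM's f hf
    have hxf := hyne f hyf
    have hne : e ≠ f := fun hEq => hxf.2 (hEq ▸ (hmemF e).mp he)
    have h2 := hdegtwo e f v hne hve hvf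
    rw [(hmemF e).mp he] at h2
    have hxfpos : 0 < x f := lt_of_le_of_ne (hxnn f) (Ne.symm hxf.1)
    linarith [hfm v]
  have hdisjFM : Disjoint F M' := by
    rw [Finset.disjoint_left]
    intro e heF heM
    obtain ⟨v, hv⟩ := sym2_exists_mem e
    exact hcross e heF e heM v hv hv
  have hMm : IsMatchingSet (F ∪ M') := by
    constructor
    · intro e he
      rcases Finset.mem_union.mp he with he | he
      · exact hFm.1 e he
      · exact hM'm.1 e he
    · intro a ha b hb hne v hva hvb
      rcases Finset.mem_union.mp ha with ha | ha <;> rcases Finset.mem_union.mp hb with hb | hb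
      · exact hFm.2 a ha b hb hne v hva hvb
      · exact hcross a ha b hb v hva hvb
      · exact hcross b hb a ha v hvb hva
      · exact hM'm.2 a ha b hb hne v hva hvb
  have hnsplit : vnorm x = (F.card : ℝ) + vnorm y := by
    rw [vnorm, vnorm]
    have hpt : ∀ e : Sym2 V, x e = (if x e = 1 then (1 : ℝ) else 0) + y e := by
      intro e
      by_cases h : x e = 1
      · rw [if_pos h, hypos e h, add_zero, h]
      · rw [if_neg h, hyneg e h, zero_add]
    rw [Finset.sum_congr rfl (fun e _ => hpt e), Finset.sum_add_distrib]
    congr 1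
    rw [Finset.sum_boole, hF]
  refine ⟨F ∪ M', hMm, ?_, ?_⟩
  · intro e he
    rcases Finset.mem_union.mp he with he | he
    · rw [(hmemF e).mp he]; exact one_ne_zero
    · exact (hyne e (hM's e he)).1
  · rw [Finset.card_union_of_disjoint hdisjFM]
    have hμ : (0 : ℝ) ≤ (matchNum G : ℝ) := Nat.cast_nonneg _
    have hF0 : (0 : ℝ) ≤ (F.card : ℝ) := Nat.cast_nonneg _
    have hM0 : (0 : ℝ) ≤ (M'.card : ℝ) := Nat.cast_nonneg _
    have key : α * (matchNum G : ℝ) ≤ (1 + ε) * ((F.card : ℝ) + (M'.card : ℝ)) := by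
      nlinarith [mul_nonneg hε0 hF0, hM'v, hnsplit, hval]
    push_cast
    nlinarith [key, mul_nonneg (mul_nonneg hα.le hμ) (sq_nonneg ε)]
end

section
/- Let ε ∈ (0, 1/2), let M be an ε-almost maximal matching (ε-AMM) in a graph G=(V,E), and let G'=(V,E') be a graph obtained from G by inserting and deleting at most ε·μ(G) edges in total (i.e., |E Δ E'| ≤ ε·μ(G)). Then M ∩ E' is a 6ε-AMM in G'. -/
open Finset

variable {V : Type*} [Fintype V] [DecidableEq V]

/-- `M` is an `ε`-almost maximal matching (`ε`-AMM) in `G`: `M` is a matching in `G` that is a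
maximal matching of the induced subgraph `G[V \ U]` for some vertex set `U` with
`|U| ≤ ε·μ(G)`. -/
def IsAMM (G : SimpleGraph V) (ε : ℝ) (M : Finset (Sym2 V)) : Prop :=
  (∀ e ∈ M, e ∈ G.edgeSet) ∧ IsMatchingSet M ∧
  ∃ U : Finset V, (U.card : ℝ) ≤ ε * (matchNum G : ℝ) ∧
    (∀ e ∈ M, ∀ v : V, v ∈ e → v ∉ U) ∧
    (∀ e ∈ G.edgeSet, (∀ v : V, v ∈ e → v ∉ U) → ∃ f ∈ M, ∃ v : V, v ∈ e ∧ v ∈ f)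

lemma matchNum_set_bddAbove (G : SimpleGraph V) :
    BddAbove {n | ∃ M : Finset (Sym2 V), (∀ e ∈ M, e ∈ G.edgeSet) ∧ IsMatchingSet M ∧ M.card = n} := by
  refine ⟨Fintype.card (Sym2 V), ?_⟩
  rintro n ⟨M, -, -, rfl⟩
  exact le_trans (Finset.card_le_univ M) (le_of_eq Finset.card_univ)

lemma card_le_matchNum (G : SimpleGraph V) (M : Finset (Sym2 V))
    (h1 : ∀ e ∈ M, e ∈ G.edgeSet) (h2 : IsMatchingSet M) : M.card ≤ matchNum G :=
  le_csSup (matchNum_set_bddAbove G) ⟨M, h1, h2, rfl⟩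

lemma exists_max_matching_s18 (G : SimpleGraph V) :
    ∃ M : Finset (Sym2 V), (∀ e ∈ M, e ∈ G.edgeSet) ∧ IsMatchingSet M ∧ M.card = matchNum G := by
  have hne : {n | ∃ M : Finset (Sym2 V), (∀ e ∈ M, e ∈ G.edgeSet) ∧ IsMatchingSet M ∧ M.card = n}.Nonempty :=
    ⟨0, ∅, by simp, ⟨by simp, by simp⟩, by simp⟩
  exact Nat.sSup_mem hne (matchNum_set_bddAbove G)

lemma card_filter_mem_sym2_le (e : Sym2 V) :
    (Finset.univ.filter (fun v : V => v ∈ e)).card ≤ 2 := by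
  induction e using Sym2.ind with
  | _ a b =>
    have : Finset.univ.filter (fun v : V => v ∈ s(a, b)) ⊆ {a, b} := by
      intro v hv
      simp only [Finset.mem_filter, Sym2.mem_iff] at hv
      simp [hv.2]
    exact le_trans (Finset.card_le_card this) (Finset.card_insert_le _ _ |>.trans (by simp))

/-- Let `ε ∈ (0, 1/2)`, let `M` be an `ε`-AMM in `G = (V,E)`, and let `G' = (V,E')` be obtained
from `G` by inserting and deleting at most `ε·μ(G)` edges in total (`|E Δ E'| ≤ ε·μ(G)`).
Then `M ∩ E'` is a `6ε`-AMM in `G'`. -/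
theorem stmt_18 (G G' : SimpleGraph V) [DecidableRel G.Adj] [DecidableRel G'.Adj]
    (ε : ℝ) (hε0 : 0 < ε) (hε1 : ε < 1 / 2)
    (M : Finset (Sym2 V)) (hM : IsAMM G ε M)
    (hdiff : ((Finset.univ.filter (fun e : Sym2 V =>
        (e ∈ G.edgeSet ∧ e ∉ G'.edgeSet) ∨ (e ∉ G.edgeSet ∧ e ∈ G'.edgeSet))).card : ℝ) ≤
      ε * (matchNum G : ℝ)) :
    IsAMM G' (6 * ε) (M.filter (fun e => e ∈ G'.edgeSet)) := by
  classical
  obtain ⟨hMG, hMmatch, U, hUcard, hUavoid, hUmax⟩ := hM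
  set D : Finset (Sym2 V) := Finset.univ.filter (fun e : Sym2 V =>
      (e ∈ G.edgeSet ∧ e ∉ G'.edgeSet) ∨ (e ∉ G.edgeSet ∧ e ∈ G'.edgeSet)) with hD
  set M' : Finset (Sym2 V) := M.filter (fun e => e ∈ G'.edgeSet) with hM'
  -- μ(G) ≤ μ(G') + |D|
  have hmu : matchNum G ≤ matchNum G' + D.card := by
    obtain ⟨N, hNG, hNmatch, hNcard⟩ := exists_max_matching_s18 G
    set N' := N.filter (fun e => e ∈ G'.edgeSet) with hN'
    have hN'G' : ∀ e ∈ N', e ∈ G'.edgeSet := fun e he => (Finset.mem_filter.mp he).2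
    have hN'match : IsMatchingSet N' := by
      obtain ⟨h1, h2⟩ := hNmatch
      exact ⟨fun e he => h1 e (Finset.filter_subset _ _ he),
        fun e he f hf => h2 e (Finset.filter_subset _ _ he) f (Finset.filter_subset _ _ hf)⟩
    have h1 : N'.card ≤ matchNum G' := card_le_matchNum G' N' hN'G' hN'match
    have h2 : (N.filter (fun e => e ∉ G'.edgeSet)) ⊆ D := by
      intro e he
      rw [Finset.mem_filter] at he
      simp only [hD, Finset.mem_filter, Finset.mem_univ, true_and]
      exact Or.inl ⟨hNG e he.1, he.2⟩
    have h3 : N.card = N'.card + (N.filter (fun e => e ∉ G'.edgeSet)).card :=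
      (Finset.card_filter_add_card_filter_not (p := fun e => e ∈ G'.edgeSet)).symm
    have h4 := Finset.card_le_card h2
    omega
  -- real inequality: 3 ε μ(G) ≤ 6 ε μ(G')
  have hDcast : ((D.card : ℝ)) ≤ ε * (matchNum G : ℝ) := hdiff
  have hmuR : (matchNum G : ℝ) ≤ (matchNum G' : ℝ) + D.card := by exact_mod_cast hmu
  have hhalf : (matchNum G : ℝ) ≤ 2 * (matchNum G' : ℝ) := by nlinarith
  -- the bad vertex set
  set VD : Finset V := Finset.univ.filter (fun v : V => ∃ e ∈ D, v ∈ e) with hVD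
  set VM : Finset V := Finset.univ.filter (fun v : V => ∃ e ∈ M', v ∈ e) with hVM
  set U' : Finset V := (U ∪ VD) \ VM with hU'
  have hVDcard : VD.card ≤ 2 * D.card := by
    have hsub : VD ⊆ D.biUnion (fun e => Finset.univ.filter (fun v : V => v ∈ e)) := by
      intro v hv
      simp only [hVD, Finset.mem_filter, Finset.mem_univ, true_and] at hv
      obtain ⟨e, he, hve⟩ := hv
      exact Finset.mem_biUnion.mpr ⟨e, he, by simp [hve]⟩
    calc VD.card ≤ _ := Finset.card_le_card hsub
      _ ≤ ∑ e ∈ D, (Finset.univ.filter (fun v : V => v ∈ e)).card := Finset.card_biUnion_le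
      _ ≤ ∑ e ∈ D, 2 := Finset.sum_le_sum (fun e _ => card_filter_mem_sym2_le e)
      _ = 2 * D.card := by rw [Finset.sum_const, smul_eq_mul, mul_comm]
  refine ⟨fun e he => (Finset.mem_filter.mp he).2, ?_, U', ?_, ?_, ?_⟩
  · obtain ⟨h1, h2⟩ := hMmatch
    exact ⟨fun e he => h1 e (Finset.filter_subset _ _ he),
      fun e he f hf => h2 e (Finset.filter_subset _ _ he) f (Finset.filter_subset _ _ hf)⟩
  · -- cardinality bound
    have hle : U'.card ≤ U.card + VD.card := by
      calc U'.card ≤ (U ∪ VD).card := Finset.card_le_card (Finset.sdiff_subset)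
        _ ≤ U.card + VD.card := Finset.card_union_le _ _
    have : (U'.card : ℝ) ≤ (U.card : ℝ) + 2 * D.card := by
      have : (U'.card : ℝ) ≤ (U.card : ℝ) + VD.card := by exact_mod_cast hle
      have h2 : (VD.card : ℝ) ≤ 2 * D.card := by exact_mod_cast hVDcard
      linarith
    nlinarith
  · -- M' avoids U'
    intro e he v hve
    simp only [hU', Finset.mem_sdiff, hVM, Finset.mem_filter, Finset.mem_univ, true_and,
      not_and, not_not]
    intro _
    exact ⟨e, he, hve⟩
  · -- maximality
    intro e heG' havoid
    by_contra hcon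
    push_neg at hcon
    have hnotVM : ∀ v ∈ e, v ∉ VM := by
      intro v hv hvVM
      simp only [hVM, Finset.mem_filter, Finset.mem_univ, true_and] at hvVM
      obtain ⟨f, hf, hvf⟩ := hvVM
      exact hcon f hf v hv hvf
    have hnotUD : ∀ v ∈ e, v ∉ U ∧ v ∉ VD := by
      intro v hv
      have h1 := havoid v hv
      simp only [hU', Finset.mem_sdiff, not_and, not_not] at h1
      have h2 : v ∉ U ∪ VD := fun hm => hnotVM v hv (h1 hm)
      simp only [Finset.mem_union] at h2
      exact ⟨fun h => h2 (Or.inl h), fun h => h2 (Or.inr h)⟩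
    have heD : e ∉ D := by
      intro heD
      induction e using Sym2.ind with
      | _ a b =>
        have : a ∈ VD := by
          simp only [hVD, Finset.mem_filter, Finset.mem_univ, true_and]
          exact ⟨s(a, b), heD, by simp⟩
        exact (hnotUD a (by simp)).2 this
    have heG : e ∈ G.edgeSet := by
      by_contra heG
      apply heD
      simp only [hD, Finset.mem_filter, Finset.mem_univ, true_and]
      exact Or.inr ⟨heG, heG'⟩
    obtain ⟨f, hfM, v, hve, hvf⟩ := hUmax e heG (fun v hv => (hnotUD v hv).1)
    by_cases hfE' : f ∈ G'.edgeSet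
    · exact hcon f (Finset.mem_filter.mpr ⟨hfM, hfE'⟩) v hve hvf
    · have hfD : f ∈ D := by
        simp only [hD, Finset.mem_filter, Finset.mem_univ, true_and]
        exact Or.inl ⟨hMG f hfM, hfE'⟩
      have : v ∈ VD := by
        simp only [hVD, Finset.mem_filter, Finset.mem_univ, true_and]
        exact ⟨f, hfD, hvf⟩
      exact (hnotUD v hve).2 this
end
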